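/- arXiv:2507.22007 — 6 statements merged into one kernel-verified Lean document; each statement's English description precedes it below -/
import Mathlib

section
/- Let d ≥ 2, t₀ > 0, and ψ : [0,∞) → ℝ be Lipschitz with ψ(t) = 0 for all t ≥ t₀. Define Φ : ℝ^d → ℝ^d by Φ(x) = R_{ψ(‖x‖)}(x), where R_θ rotates the first two coordinates by θ. Then Φ is a bijection, Φ is (Lip(ψ)·t₀ + 1)-bilipschitz, and Φ(x) = x for all x outside the open ball B(0, t₀). -/
/-!
Each `R θ` is an isometry and `‖R α x - R β x‖ ≤ |α - β| ‖x‖`. Passing from `Φ x` to `Φ y`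
through `R (ψ ‖x‖) y` or `R (ψ ‖y‖) x` gives
`dist (Φ x) (Φ y) ≤ dist x y + |ψ ‖x‖ - ψ ‖y‖| · min ‖x‖ ‖y‖`, and the last term is at most
`K t₀ dist x y` (`K = Lip(ψ)`): it vanishes when both norms are `≥ t₀`. Since
`R α ∘ R β = R (α + β)` and rotations preserve norms, `x ↦ R (-ψ ‖x‖) x` inverts `Φ`; it is of
the same form with `-ψ` in place of `ψ`, which gives the lower bound.
-/

/-- `f` is `L`-bilipschitz on the set `s`. -/
def IsBilipOn {α β : Type*} [PseudoMetricSpace α] [PseudoMetricSpace β]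
    (L : ℝ) (f : α → β) (s : Set α) : Prop :=
  ∀ x ∈ s, ∀ y ∈ s, L⁻¹ * dist x y ≤ dist (f x) (f y) ∧ dist (f x) (f y) ≤ L * dist x y

open Set NNReal

def RotatesFirstTwoCoords {d : ℕ} (hd : 2 ≤ d)
    (R : ℝ → EuclideanSpace ℝ (Fin d) → EuclideanSpace ℝ (Fin d)) : Prop :=
  ∀ (θ : ℝ) (x : EuclideanSpace ℝ (Fin d)),
    R θ x ⟨0, by linarith⟩ = Real.cos θ * x ⟨0, by linarith⟩ - Real.sin θ * x ⟨1, by linarith⟩ ∧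
    R θ x ⟨1, by linarith⟩ = Real.sin θ * x ⟨0, by linarith⟩ + Real.cos θ * x ⟨1, by linarith⟩ ∧
    ∀ i : Fin d, i ≠ ⟨0, by linarith⟩ → i ≠ ⟨1, by linarith⟩ → R θ x i = x i

section Coordinates

variable {d : ℕ} (hd : 2 ≤ d)

theorem EuclideanSpace.eq_of_apply_zero_one {v w : EuclideanSpace ℝ (Fin d)}
    (h₀ : v ⟨0, by linarith⟩ = w ⟨0, by linarith⟩) (h₁ : v ⟨1, by linarith⟩ = w ⟨1, by linarith⟩)
    (h : ∀ i : Fin d, i ≠ ⟨0, by linarith⟩ → i ≠ ⟨1, by linarith⟩ → v i = w i) : v = w := by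
  ext i
  by_cases hi₀ : i = ⟨0, by linarith⟩
  · rwa [hi₀]
  by_cases hi₁ : i = ⟨1, by linarith⟩
  · rwa [hi₁]
  exact h i hi₀ hi₁

theorem EuclideanSpace.norm_sq_eq_apply_zero_one_add (v : EuclideanSpace ℝ (Fin d)) :
    ‖v‖ ^ 2 = v ⟨0, by linarith⟩ ^ 2 + v ⟨1, by linarith⟩ ^ 2 +
      ∑ i ∈ {(⟨0, by linarith⟩ : Fin d), ⟨1, by linarith⟩}ᶜ, v i ^ 2 := by
  rw [EuclideanSpace.real_norm_sq_eq,
    ← Finset.sum_add_sum_compl {⟨0, by linarith⟩, ⟨1, by linarith⟩},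
    Finset.sum_pair (by simp [Fin.ext_iff])]

end Coordinates

namespace RotatesFirstTwoCoords

variable {d : ℕ} {hd : 2 ≤ d} {R : ℝ → EuclideanSpace ℝ (Fin d) → EuclideanSpace ℝ (Fin d)}

theorem apply_zero (hR : RotatesFirstTwoCoords hd R) (x : EuclideanSpace ℝ (Fin d)) :
    R 0 x = x := by
  obtain ⟨h₀, h₁, h⟩ := hR 0 x
  exact EuclideanSpace.eq_of_apply_zero_one hd (by simp [h₀]) (by simp [h₁]) h

theorem apply_apply (hR : RotatesFirstTwoCoords hd R) (α β : ℝ) (x : EuclideanSpace ℝ (Fin d)) :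
    R α (R β x) = R (α + β) x := by
  obtain ⟨h₀, h₁, h⟩ := hR β x
  obtain ⟨g₀, g₁, g⟩ := hR α (R β x)
  obtain ⟨k₀, k₁, k⟩ := hR (α + β) x
  refine EuclideanSpace.eq_of_apply_zero_one hd ?_ ?_ fun i hi₀ hi₁ => ?_
  · rw [g₀, h₀, h₁, k₀, Real.cos_add, Real.sin_add]; ring
  · rw [g₁, h₀, h₁, k₁, Real.cos_add, Real.sin_add]; ring
  · rw [g i hi₀ hi₁, h i hi₀ hi₁, k i hi₀ hi₁]

theorem map_sub (hR : RotatesFirstTwoCoords hd R) (θ : ℝ) (x y : EuclideanSpace ℝ (Fin d)) :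
    R θ x - R θ y = R θ (x - y) := by
  obtain ⟨h₀, h₁, h⟩ := hR θ x
  obtain ⟨g₀, g₁, g⟩ := hR θ y
  obtain ⟨k₀, k₁, k⟩ := hR θ (x - y)
  refine EuclideanSpace.eq_of_apply_zero_one hd ?_ ?_ fun i hi₀ hi₁ => ?_
  · simp only [PiLp.sub_apply, h₀, g₀, k₀]; ring
  · simp only [PiLp.sub_apply, h₁, g₁, k₁]; ring
  · simp only [PiLp.sub_apply, h i hi₀ hi₁, g i hi₀ hi₁, k i hi₀ hi₁]

theorem norm_apply (hR : RotatesFirstTwoCoords hd R) (θ : ℝ) (x : EuclideanSpace ℝ (Fin d)) :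
    ‖R θ x‖ = ‖x‖ := by
  obtain ⟨h₀, h₁, h⟩ := hR θ x
  have hrest : ∑ i ∈ {(⟨0, by linarith⟩ : Fin d), ⟨1, by linarith⟩}ᶜ, R θ x i ^ 2 =
      ∑ i ∈ {(⟨0, by linarith⟩ : Fin d), ⟨1, by linarith⟩}ᶜ, x i ^ 2 :=
    Finset.sum_congr rfl fun i hi => by
      simp only [Finset.mem_compl, Finset.mem_insert, Finset.mem_singleton, not_or] at hi
      rw [h i hi.1 hi.2]
  refine (pow_left_inj₀ (norm_nonneg _) (norm_nonneg _) two_ne_zero).1 ?_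
  rw [EuclideanSpace.norm_sq_eq_apply_zero_one_add hd,
    EuclideanSpace.norm_sq_eq_apply_zero_one_add hd, hrest, h₀, h₁]
  linear_combination (x ⟨0, by linarith⟩ ^ 2 + x ⟨1, by linarith⟩ ^ 2) * Real.sin_sq_add_cos_sq θ

theorem dist_apply (hR : RotatesFirstTwoCoords hd R) (θ : ℝ) (x y : EuclideanSpace ℝ (Fin d)) :
    dist (R θ x) (R θ y) = dist x y := by
  rw [dist_eq_norm, dist_eq_norm, hR.map_sub, hR.norm_apply]

theorem norm_apply_sub_self_le (hR : RotatesFirstTwoCoords hd R) (θ : ℝ)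
    (x : EuclideanSpace ℝ (Fin d)) : ‖R θ x - x‖ ≤ |θ| * ‖x‖ := by
  obtain ⟨h₀, h₁, h⟩ := hR θ x
  have hrest : ∑ i ∈ {(⟨0, by linarith⟩ : Fin d), ⟨1, by linarith⟩}ᶜ, (R θ x - x) i ^ 2 = 0 :=
    Finset.sum_eq_zero fun i hi => by
      simp only [Finset.mem_compl, Finset.mem_insert, Finset.mem_singleton, not_or] at hi
      simp [h i hi.1 hi.2]
  have hx := EuclideanSpace.norm_sq_eq_apply_zero_one_add hd x
  have hrest_x : 0 ≤ ∑ i ∈ {(⟨0, by linarith⟩ : Fin d), ⟨1, by linarith⟩}ᶜ, x i ^ 2 :=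
    Finset.sum_nonneg fun i _ => sq_nonneg _
  -- `‖R θ x - x‖² = (2 - 2 cos θ) (x₀² + x₁²)` and `2 - 2 cos θ ≤ θ²`
  have hcos := Real.one_sub_sq_div_two_le_cos (x := θ)
  refine (pow_le_pow_iff_left₀ (norm_nonneg _) (by positivity) two_ne_zero).1 ?_
  rw [EuclideanSpace.norm_sq_eq_apply_zero_one_add hd, hrest, PiLp.sub_apply, PiLp.sub_apply,
    h₀, h₁, mul_pow, sq_abs]
  nlinarith [Real.sin_sq_add_cos_sq θ, sq_nonneg (x ⟨0, by linarith⟩),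
    sq_nonneg (x ⟨1, by linarith⟩)]

theorem dist_apply_apply_le (hR : RotatesFirstTwoCoords hd R) (α β : ℝ)
    (x : EuclideanSpace ℝ (Fin d)) : dist (R α x) (R β x) ≤ |α - β| * ‖x‖ := by
  have hα : R α x = R (α - β) (R β x) := by rw [hR.apply_apply, sub_add_cancel]
  rw [dist_eq_norm, hα, ← hR.norm_apply β x]
  exact hR.norm_apply_sub_self_le _ _

end RotatesFirstTwoCoords

theorem LipschitzOnWith.abs_sub_mul_min_le {φ : ℝ → ℝ} {K : ℝ≥0} {t₀ : ℝ}
    (hφ : LipschitzOnWith K φ (Ici 0)) (hφ0 : ∀ t, t₀ ≤ t → φ t = 0) (ht₀ : 0 ≤ t₀)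
    {a b : ℝ} (ha : 0 ≤ a) (hb : 0 ≤ b) : |φ a - φ b| * min a b ≤ K * t₀ * |a - b| := by
  by_cases h : t₀ ≤ min a b
  · rw [hφ0 a (h.trans (min_le_left a b)), hφ0 b (h.trans (min_le_right a b)), sub_self,
      abs_zero, zero_mul]
    positivity
  · have hlip : |φ a - φ b| ≤ K * |a - b| := by
      simpa only [Real.dist_eq] using hφ.dist_le_mul a ha b hb
    calc |φ a - φ b| * min a b ≤ K * |a - b| * t₀ :=
          mul_le_mul hlip (not_le.1 h).le (le_min ha hb) (by positivity)
      _ = K * t₀ * |a - b| := by ring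

section IsometryFamily

variable {E : Type*} [SeminormedAddCommGroup E] {R : ℝ → E → E}

theorem dist_apply_norm_apply_le (hiso : ∀ θ x y, dist (R θ x) (R θ y) = dist x y)
    (hmove : ∀ α β x, dist (R α x) (R β x) ≤ |α - β| * ‖x‖) (φ : ℝ → ℝ) (x y : E) :
    dist (R (φ ‖x‖) x) (R (φ ‖y‖) y) ≤ dist x y + |φ ‖x‖ - φ ‖y‖| * min ‖x‖ ‖y‖ := by
  have via_x : dist (R (φ ‖x‖) x) (R (φ ‖y‖) y) ≤ dist x y + |φ ‖x‖ - φ ‖y‖| * ‖x‖ := by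
    linarith [dist_triangle (R (φ ‖x‖) x) (R (φ ‖y‖) x) (R (φ ‖y‖) y), hiso (φ ‖y‖) x y,
      hmove (φ ‖x‖) (φ ‖y‖) x]
  have via_y : dist (R (φ ‖x‖) x) (R (φ ‖y‖) y) ≤ dist x y + |φ ‖x‖ - φ ‖y‖| * ‖y‖ := by
    linarith [dist_triangle (R (φ ‖x‖) x) (R (φ ‖x‖) y) (R (φ ‖y‖) y), hiso (φ ‖x‖) x y,
      hmove (φ ‖x‖) (φ ‖y‖) y]
  rcases min_choice ‖x‖ ‖y‖ with h | h <;> rw [h] <;> assumption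

theorem dist_apply_norm_apply_le_mul (hiso : ∀ θ x y, dist (R θ x) (R θ y) = dist x y)
    (hmove : ∀ α β x, dist (R α x) (R β x) ≤ |α - β| * ‖x‖) {φ : ℝ → ℝ} {K : ℝ≥0} {t₀ : ℝ}
    (hφ : LipschitzOnWith K φ (Ici 0)) (hφ0 : ∀ t, t₀ ≤ t → φ t = 0) (ht₀ : 0 ≤ t₀) (x y : E) :
    dist (R (φ ‖x‖) x) (R (φ ‖y‖) y) ≤ (K * t₀ + 1) * dist x y :=
  calc dist (R (φ ‖x‖) x) (R (φ ‖y‖) y)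
      ≤ dist x y + |φ ‖x‖ - φ ‖y‖| * min ‖x‖ ‖y‖ := dist_apply_norm_apply_le hiso hmove φ x y
    _ ≤ dist x y + K * t₀ * |‖x‖ - ‖y‖| := by
      linarith [hφ.abs_sub_mul_min_le hφ0 ht₀ (norm_nonneg x) (norm_nonneg y)]
    _ ≤ dist x y + K * t₀ * dist x y := by
      gcongr
      rw [dist_eq_norm]
      exact abs_norm_sub_norm_le x y
    _ = (K * t₀ + 1) * dist x y := by ring

end IsometryFamily

theorem stmt_1 (d : ℕ) (hd : 2 ≤ d)
    (R : ℝ → EuclideanSpace ℝ (Fin d) → EuclideanSpace ℝ (Fin d))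
    (hR : ∀ (θ : ℝ) (x : EuclideanSpace ℝ (Fin d)),
      R θ x ⟨0, by omega⟩ = Real.cos θ * x ⟨0, by omega⟩ - Real.sin θ * x ⟨1, by omega⟩ ∧
      R θ x ⟨1, by omega⟩ = Real.sin θ * x ⟨0, by omega⟩ + Real.cos θ * x ⟨1, by omega⟩ ∧
      ∀ i : Fin d, i ≠ ⟨0, by omega⟩ → i ≠ ⟨1, by omega⟩ → R θ x i = x i)
    (t₀ : ℝ) (ht₀ : 0 < t₀) (ψ : ℝ → ℝ) (K : NNReal)
    (hψ : LipschitzOnWith K ψ (Set.Ici 0))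
    (hψ0 : ∀ t : ℝ, t₀ ≤ t → ψ t = 0)
    (Φ : EuclideanSpace ℝ (Fin d) → EuclideanSpace ℝ (Fin d))
    (hΦ : ∀ x, Φ x = R (ψ ‖x‖) x) :
    Function.Bijective Φ ∧ IsBilipOn ((K : ℝ) * t₀ + 1) Φ Set.univ ∧
      ∀ x : EuclideanSpace ℝ (Fin d), t₀ ≤ ‖x‖ → Φ x = x := by
  have hR' : RotatesFirstTwoCoords hd R := hR
  have lip : ∀ φ : ℝ → ℝ, LipschitzOnWith K φ (Ici 0) → (∀ t, t₀ ≤ t → φ t = 0) → ∀ x y,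
      dist (R (φ ‖x‖) x) (R (φ ‖y‖) y) ≤ (K * t₀ + 1) * dist x y := fun φ hφ hφ0 =>
    dist_apply_norm_apply_le_mul hR'.dist_apply hR'.dist_apply_apply_le hφ hφ0 ht₀.le
  set Ψ := fun x => R (-ψ ‖x‖) x
  have hΨΦ : Function.LeftInverse Ψ Φ := fun x => by
    simp only [Ψ, hΦ, hR'.norm_apply, hR'.apply_apply, neg_add_cancel, hR'.apply_zero]
  have hΦΨ : Function.RightInverse Ψ Φ := fun x => by
    simp only [Ψ, hΦ, hR'.norm_apply, hR'.apply_apply, add_neg_cancel, hR'.apply_zero]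
  refine ⟨⟨hΨΦ.injective, hΦΨ.surjective⟩, fun x _ y _ => ⟨?_, ?_⟩,
    fun x hx => by rw [hΦ, hψ0 _ hx, hR'.apply_zero]⟩
  · have hψneg : LipschitzOnWith K (fun t => -ψ t) (Ici 0) :=
      fun a ha b hb => by simpa only [edist_neg_neg] using hψ ha hb
    have := lip (fun t => -ψ t) hψneg (fun t ht => by rw [hψ0 t ht, neg_zero]) (Φ x) (Φ y)
    change dist (Ψ (Φ x)) (Ψ (Φ y)) ≤ _ at this
    rw [hΨΦ, hΨΦ] at this
    rwa [inv_mul_le_iff₀ (by positivity)]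
  · rw [hΦ, hΦ]
    exact lip ψ hψ hψ0 x y
end

section
/- Let d ≥ 2, x, y ∈ ℝ^d, and 0 < r ≤ ‖y−x‖/2. Then there exists a (4‖y−x‖²/r²)-bilipschitz bijection τ : ℝ^d → ℝ^d such that τ(z) = z for all z outside the open r-neighbourhood of the segment [x,y], τ(x) = y, and τ(y) = x. -/
open scoped RealInnerProductSpace

noncomputable section

namespace SwapAux
variable {E : Type*} [NormedAddCommGroup E] [InnerProductSpace ℝ E]

/-- Rotation by angle `θ` in the plane spanned by the orthonormal pair `e, f`. -/
def rot (e f : E) (θ : ℝ) (u : E) : E :=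
  u + ((Real.cos θ - 1) * ⟪e, u⟫ - Real.sin θ * ⟪f, u⟫) • e
    + (Real.sin θ * ⟪e, u⟫ + (Real.cos θ - 1) * ⟪f, u⟫) • f

/-- Squeeze by factor `c` in the direction `e`. -/
def Amap (e : E) (c : ℝ) (u : E) : E := u + ((c - 1) * ⟪e, u⟫) • e

variable {e f : E}

lemma norm_comb (he : ‖e‖ = 1) (hf : ‖f‖ = 1) (hef : ⟪e, f⟫ = 0) (α β : ℝ) (u : E) :
    ‖u + α • e + β • f‖ ^ 2 = ‖u‖ ^ 2 + α ^ 2 + β ^ 2 + 2*α*⟪e, u⟫ + 2*β*⟪f, u⟫ := by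
  have hee : ⟪e, e⟫ = 1 := by rw [real_inner_self_eq_norm_sq, he]; norm_num
  have hff : ⟪f, f⟫ = 1 := by rw [real_inner_self_eq_norm_sq, hf]; norm_num
  have hfe : ⟪f, e⟫ = 0 := by rw [real_inner_comm]; exact hef
  rw [← real_inner_self_eq_norm_sq, ← real_inner_self_eq_norm_sq]
  simp only [inner_add_left, inner_add_right, inner_smul_left, inner_smul_right,
    hee, hff, hef, hfe, real_inner_comm u e, real_inner_comm u f,
    starRingEnd_apply, star_trivial]
  ring

lemma norm_comb' (he : ‖e‖ = 1) (hf : ‖f‖ = 1) (hef : ⟪e, f⟫ = 0) (α : ℝ) (u : E) :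
    ‖u + α • e‖ ^ 2 = ‖u‖ ^ 2 + α ^ 2 + 2*α*⟪e, u⟫ := by
  have h := norm_comb he hf hef α 0 u
  simp only [zero_smul, add_zero] at h
  linarith

lemma bessel1 (he : ‖e‖ = 1) (hf : ‖f‖ = 1) (hef : ⟪e, f⟫ = 0) (u : E) :
    ⟪e, u⟫ ^ 2 ≤ ‖u‖ ^ 2 := by
  have h := norm_comb' he hf hef (-⟪e, u⟫) u
  nlinarith [sq_nonneg ‖u + (-⟪e, u⟫) • e‖]

lemma inner_e_rot (he : ‖e‖ = 1) (hef : ⟪e, f⟫ = 0) (θ : ℝ) (u : E) :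
    ⟪e, rot e f θ u⟫ = Real.cos θ * ⟪e, u⟫ - Real.sin θ * ⟪f, u⟫ := by
  have hee : ⟪e, e⟫ = 1 := by rw [real_inner_self_eq_norm_sq, he]; norm_num
  simp only [rot, inner_add_right, inner_smul_right, hee, hef]
  ring

lemma inner_f_rot (hf : ‖f‖ = 1) (hef : ⟪e, f⟫ = 0) (θ : ℝ) (u : E) :
    ⟪f, rot e f θ u⟫ = Real.sin θ * ⟪e, u⟫ + Real.cos θ * ⟪f, u⟫ := by
  have hff : ⟪f, f⟫ = 1 := by rw [real_inner_self_eq_norm_sq, hf]; norm_num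
  have hfe : ⟪f, e⟫ = 0 := by rw [real_inner_comm]; exact hef
  simp only [rot, inner_add_right, inner_smul_right, hff, hfe]
  ring

lemma rot_zero (u : E) : rot e f 0 u = u := by simp [rot]

lemma rot_sub (θ : ℝ) (u v : E) : rot e f θ (u - v) = rot e f θ u - rot e f θ v := by
  simp only [rot, inner_sub_right]
  module

lemma norm_rot (he : ‖e‖ = 1) (hf : ‖f‖ = 1) (hef : ⟪e, f⟫ = 0) (θ : ℝ) (u : E) :
    ‖rot e f θ u‖ = ‖u‖ := by
  have h := norm_comb he hf hef ((Real.cos θ - 1) * ⟪e, u⟫ - Real.sin θ * ⟪f, u⟫)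
    (Real.sin θ * ⟪e, u⟫ + (Real.cos θ - 1) * ⟪f, u⟫) u
  have hsc := Real.sin_sq_add_cos_sq θ
  have hsq : ‖rot e f θ u‖ ^ 2 = ‖u‖ ^ 2 := by
    rw [rot, h]; linear_combination (⟪e,u⟫^2 + ⟪f,u⟫^2) * hsc
  rw [← Real.sqrt_sq (norm_nonneg (rot e f θ u)), ← Real.sqrt_sq (norm_nonneg u), hsq]

lemma rot_rot (he : ‖e‖ = 1) (hf : ‖f‖ = 1) (hef : ⟪e, f⟫ = 0) (α β : ℝ) (u : E) :
    rot e f α (rot e f β u) = rot e f (α + β) u := by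
  rw [show rot e f α (rot e f β u)
      = rot e f β u + ((Real.cos α - 1) * ⟪e, rot e f β u⟫ - Real.sin α * ⟪f, rot e f β u⟫) • e
        + (Real.sin α * ⟪e, rot e f β u⟫ + (Real.cos α - 1) * ⟪f, rot e f β u⟫) • f from rfl,
    inner_e_rot he hef, inner_f_rot hf hef]
  rw [show rot e f β u = u + ((Real.cos β - 1) * ⟪e, u⟫ - Real.sin β * ⟪f, u⟫) • e
        + (Real.sin β * ⟪e, u⟫ + (Real.cos β - 1) * ⟪f, u⟫) • f from rfl]
  rw [show rot e f (α+β) u = u + ((Real.cos (α+β) - 1) * ⟪e, u⟫ - Real.sin (α+β) * ⟪f, u⟫) • e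
        + (Real.sin (α+β) * ⟪e, u⟫ + (Real.cos (α+β) - 1) * ⟪f, u⟫) • f from rfl]
  rw [Real.cos_add, Real.sin_add]
  match_scalars <;> ring

lemma norm_rot_sub_rot (he : ‖e‖ = 1) (hf : ‖f‖ = 1) (hef : ⟪e, f⟫ = 0) (α β : ℝ) (u : E) :
    ‖rot e f α u - rot e f β u‖ ≤ |α - β| * ‖u‖ := by
  have hbessel : ⟪e,u⟫^2 + ⟪f,u⟫^2 ≤ ‖u‖^2 := by
    have h := norm_comb he hf hef (-⟪e,u⟫) (-⟪f,u⟫) u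
    nlinarith [sq_nonneg ‖u + (-⟪e,u⟫) • e + (-⟪f,u⟫) • f‖]
  set p := ⟪e,u⟫; set q := ⟪f,u⟫
  have hdiff : rot e f α u - rot e f β u
      = (0:E) + (((Real.cos α - Real.cos β) * p - (Real.sin α - Real.sin β) * q)) • e
        + (((Real.sin α - Real.sin β) * p + (Real.cos α - Real.cos β) * q)) • f := by
    simp only [rot]; module
  have hsq : ‖rot e f α u - rot e f β u‖^2
      = ((Real.cos α - Real.cos β)^2 + (Real.sin α - Real.sin β)^2) * (p^2 + q^2) := by
    rw [hdiff, norm_comb he hf hef]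
    simp only [inner_zero_right, norm_zero]
    ring
  have hcs : (Real.cos α - Real.cos β)^2 + (Real.sin α - Real.sin β)^2 ≤ (α - β)^2 := by
    have h1 : Real.cos (α - β) = Real.cos α * Real.cos β + Real.sin α * Real.sin β := by
      rw [Real.cos_sub]
    have h2 := Real.one_sub_sq_div_two_le_cos (x := α - β)
    nlinarith [Real.sin_sq_add_cos_sq α, Real.sin_sq_add_cos_sq β]
  have hle : ‖rot e f α u - rot e f β u‖^2 ≤ (|α - β| * ‖u‖)^2 := by
    rw [hsq]
    have h5 : (α-β)^2 * (p^2+q^2) ≤ (α-β)^2 * ‖u‖^2 :=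
      mul_le_mul_of_nonneg_left hbessel (sq_nonneg _)
    calc ((Real.cos α - Real.cos β)^2 + (Real.sin α - Real.sin β)^2) * (p^2 + q^2)
        ≤ (α - β)^2 * (p^2+q^2) := by nlinarith [sq_nonneg p, sq_nonneg q]
      _ ≤ (α-β)^2 * ‖u‖^2 := h5
      _ = (|α - β| * ‖u‖)^2 := by rw [mul_pow, sq_abs]
  have h1 : (0:ℝ) ≤ |α - β| * ‖u‖ := by positivity
  nlinarith [norm_nonneg (rot e f α u - rot e f β u)]

lemma rot_smul_e (he : ‖e‖ = 1) (hf : ‖f‖ = 1) (hef : ⟪e, f⟫ = 0) (θ t : ℝ) :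
    rot e f θ (t • e) = (Real.cos θ * t) • e + (Real.sin θ * t) • f := by
  have hee : ⟪e, e⟫ = 1 := by rw [real_inner_self_eq_norm_sq, he]; norm_num
  have hfe : ⟪f, e⟫ = 0 := by rw [real_inner_comm]; exact hef
  simp only [rot, inner_smul_right, hee, hfe, mul_one, mul_zero]
  match_scalars <;> ring

lemma Amap_sub (c : ℝ) (u v : E) : Amap e c (u - v) = Amap e c u - Amap e c v := by
  simp only [Amap, inner_sub_right]; module

lemma Amap_Amap (he : ‖e‖ = 1) {c c' : ℝ} (h : c' * c = 1) (u : E) :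
    Amap e c' (Amap e c u) = u := by
  have hee : ⟪e, e⟫ = 1 := by rw [real_inner_self_eq_norm_sq, he]; norm_num
  simp only [Amap, inner_add_right, inner_smul_right, hee, mul_one]
  match_scalars
  · ring
  · linear_combination ⟪e, u⟫ * h

lemma Amap_smul_e (he : ‖e‖ = 1) (c t : ℝ) : Amap e c (t • e) = (c * t) • e := by
  have hee : ⟪e, e⟫ = 1 := by rw [real_inner_self_eq_norm_sq, he]; norm_num
  simp only [Amap, inner_smul_right, hee, mul_one]
  match_scalars; ring

lemma norm_Amap_le_one (he : ‖e‖ = 1) (hf : ‖f‖ = 1) (hef : ⟪e, f⟫ = 0) {c : ℝ}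
    (hc0 : 0 ≤ c) (hc1 : c ≤ 1) (u : E) : ‖Amap e c u‖ ≤ ‖u‖ := by
  have h := norm_comb' he hf hef ((c - 1) * ⟪e, u⟫) u
  have hsq : ‖Amap e c u‖ ^ 2 ≤ ‖u‖ ^ 2 := by
    rw [Amap, h]; nlinarith [sq_nonneg ⟪e, u⟫]
  nlinarith [norm_nonneg (Amap e c u), norm_nonneg u]

lemma norm_Amap_le_big (he : ‖e‖ = 1) (hf : ‖f‖ = 1) (hef : ⟪e, f⟫ = 0) {c : ℝ}
    (hc1 : 1 ≤ c) (u : E) : ‖Amap e c u‖ ≤ c * ‖u‖ := by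
  have h := norm_comb' he hf hef ((c - 1) * ⟪e, u⟫) u
  have hb := bessel1 he hf hef u
  have hsq : ‖Amap e c u‖ ^ 2 ≤ (c * ‖u‖) ^ 2 := by
    rw [Amap, h]
    nlinarith [mul_le_mul_of_nonneg_left hb (by nlinarith : (0:ℝ) ≤ c^2 - 1)]
  have hcn : (0:ℝ) ≤ c * ‖u‖ := by positivity
  nlinarith [norm_nonneg (Amap e c u)]

lemma clamp_lip (A B : ℝ) : |max 0 (min 1 A) - max 0 (min 1 B)| ≤ |A - B| := by
  rcases max_cases 0 (min 1 A) with ⟨h1, h2⟩ | ⟨h1, h2⟩ <;>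
  rcases max_cases 0 (min 1 B) with ⟨h3, h4⟩ | ⟨h3, h4⟩ <;>
  rcases min_cases 1 A with ⟨h5, h6⟩ | ⟨h5, h6⟩ <;>
  rcases min_cases 1 B with ⟨h7, h8⟩ | ⟨h7, h8⟩ <;>
  simp only [h1, h3, h5, h7] at * <;>
  rw [abs_le] <;>
  constructor <;>
  cases abs_cases (A - B) <;>
  linarith

lemma lipN (he : ‖e‖ = 1) (hf : ‖f‖ = 1) (hef : ⟪e, f⟫ = 0) (θ : ℝ → ℝ) (K r : ℝ)
    (hK : 0 ≤ K) (hr : 0 ≤ r)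
    (hlip : ∀ s t, |θ s - θ t| ≤ K * |s - t|) (h0 : ∀ s, r ≤ s → θ s = 0) (u v : E) :
    ‖rot e f (θ ‖u‖) u - rot e f (θ ‖v‖) v‖ ≤ (1 + K * r) * ‖u - v‖ := by
  suffices H : ∀ u v : E, ‖v‖ ≤ ‖u‖ →
      ‖rot e f (θ ‖u‖) u - rot e f (θ ‖v‖) v‖ ≤ (1 + K * r) * ‖u - v‖ by
    rcases le_total ‖v‖ ‖u‖ with h | h
    · exact H u v h
    · rw [norm_sub_rev, norm_sub_rev u v]; exact H v u h
  intro u v huv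
  have key : rot e f (θ ‖u‖) u - rot e f (θ ‖v‖) v
      = rot e f (θ ‖u‖) (u - v) + (rot e f (θ ‖u‖) v - rot e f (θ ‖v‖) v) := by
    rw [rot_sub]; abel
  rw [key]
  have h1 : ‖rot e f (θ ‖u‖) (u - v)‖ = ‖u - v‖ := norm_rot he hf hef _ _
  have h2 : ‖rot e f (θ ‖u‖) v - rot e f (θ ‖v‖) v‖ ≤ |θ ‖u‖ - θ ‖v‖| * ‖v‖ :=
    norm_rot_sub_rot he hf hef _ _ _
  have h3 : |θ ‖u‖ - θ ‖v‖| * ‖v‖ ≤ K * r * ‖u - v‖ := by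
    rcases le_or_gt ‖v‖ r with hvr | hvr
    · have ha : |θ ‖u‖ - θ ‖v‖| ≤ K * ‖u - v‖ := by
        calc |θ ‖u‖ - θ ‖v‖| ≤ K * |‖u‖ - ‖v‖| := hlip _ _
          _ ≤ K * ‖u - v‖ := mul_le_mul_of_nonneg_left (abs_norm_sub_norm_le u v) hK
      calc |θ ‖u‖ - θ ‖v‖| * ‖v‖ ≤ (K * ‖u - v‖) * r :=
            mul_le_mul ha hvr (norm_nonneg _) (by positivity)
        _ = K * r * ‖u - v‖ := by ring
    · have h4 : θ ‖u‖ = 0 := h0 _ (le_trans hvr.le huv)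
      have h5 : θ ‖v‖ = 0 := h0 _ hvr.le
      rw [h4, h5]
      simp
      positivity
  calc ‖rot e f (θ ‖u‖) (u - v) + (rot e f (θ ‖u‖) v - rot e f (θ ‖v‖) v)‖
      ≤ ‖rot e f (θ ‖u‖) (u - v)‖ + ‖rot e f (θ ‖u‖) v - rot e f (θ ‖v‖) v‖ := norm_add_le _ _
    _ ≤ ‖u - v‖ + K * r * ‖u - v‖ := by rw [h1]; linarith
    _ = (1 + K * r) * ‖u - v‖ := by ring

lemma lt_of_sq_lt_sq' {A B : ℝ} (h : A^2 < B^2) (hA : 0 ≤ A) (hB : 0 ≤ B) : A < B := by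
  nlinarith

lemma ellipsoid_key {a r c p W : ℝ} (ha : 0 < a) (hr : 0 < r) (hc0 : 0 < c)
    (hcar : c * (a + r) = r) (hlt : W + (c*p)^2 < r^2) (hW : 0 ≤ W) :
    W + (p - max (-a) (min a p))^2 < r^2 := by
  have h3 : (c*p)^2 < r^2 := by nlinarith
  rcases le_or_gt p a with h1 | h1
  · rcases le_or_gt (-a) p with h2 | h2
    · rw [min_eq_right h1, max_eq_right h2]
      simpa using (by nlinarith [sq_nonneg (c*p)] : W + (p - p)^2 < r^2)
    · rw [min_eq_right h1, max_eq_left h2.le]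
      have hcpneg : c*p < 0 := mul_neg_of_pos_of_neg hc0 (by linarith)
      have h4 : -(c*p) < r := by nlinarith
      have h5 : -p < a + r := by
        have hml : c * (-p) < c * (a + r) := by rw [hcar]; linarith
        exact lt_of_mul_lt_mul_left hml hc0.le
      have h6 : -a - p ≤ -(c*p) := by
        nlinarith [mul_pos ha (show (0:ℝ) < a + r + p by linarith)]
      have h7 : (p - -a)^2 ≤ (c*p)^2 := by
        rw [show (c*p)^2 = (-(c*p))^2 by ring]
        apply sq_le_sq' <;> nlinarith
      nlinarith
  · rw [min_eq_left h1.le, max_eq_right (by linarith : -(a:ℝ) ≤ a)]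
    have hcppos : 0 < c*p := mul_pos hc0 (by linarith)
    have h4 : c*p < r := by nlinarith
    have h5 : p < a + r := by
      have hml : c * p < c * (a + r) := by rw [hcar]; linarith
      exact lt_of_mul_lt_mul_left hml hc0.le
    have h6 : p - a ≤ c*p := by
      nlinarith [mul_pos ha (show (0:ℝ) < a + r - p by linarith)]
    have h7 : (p - a)^2 ≤ (c*p)^2 := by
      apply sq_le_sq' <;> nlinarith
    nlinarith

end SwapAux

end

set_option maxHeartbeats 2000000 in
theorem stmt_2 (d : ℕ) (hd : 2 ≤ d) (x y : EuclideanSpace ℝ (Fin d))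
    (r : ℝ) (hr : 0 < r) (hr2 : r ≤ ‖y - x‖ / 2) :
    ∃ τ : EuclideanSpace ℝ (Fin d) → EuclideanSpace ℝ (Fin d),
      Function.Bijective τ ∧
      IsBilipOn (4 * ‖y - x‖ ^ 2 / r ^ 2) τ Set.univ ∧
      (∀ z, z ∉ Metric.thickening r (segment ℝ x y) → τ z = z) ∧
      τ x = y ∧ τ y = x := by
  classical
  open SwapAux in
  set a : ℝ := ‖y - x‖ / 2 with ha_def
  have hra : r ≤ a := hr2
  have ha : 0 < a := lt_of_lt_of_le hr hra
  have hh : 0 < ‖y - x‖ := by rw [ha_def] at ha; linarith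
  have hna : ‖y - x‖ = 2 * a := by rw [ha_def]; ring
  set m : EuclideanSpace ℝ (Fin d) := (2:ℝ)⁻¹ • (x + y) with hm_def
  set e : EuclideanSpace ℝ (Fin d) := ‖y - x‖⁻¹ • (y - x) with he_def
  have he : ‖e‖ = 1 := by
    rw [he_def, norm_smul, norm_inv, norm_norm]
    field_simp
  -- find a unit vector orthogonal to e
  obtain ⟨f, hf, hef⟩ : ∃ f : EuclideanSpace ℝ (Fin d), ‖f‖ = 1 ∧ ⟪e, f⟫ = 0 := by
    have he0 : e ≠ 0 := by
      intro h0; rw [h0, norm_zero] at he; norm_num at he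
    have hKne : ((ℝ ∙ e)ᗮ : Submodule ℝ (EuclideanSpace ℝ (Fin d))) ≠ ⊥ := by
      intro hbot
      have h1 : Module.finrank ℝ (ℝ ∙ e) = 1 := finrank_span_singleton he0
      have h2 := Submodule.finrank_add_finrank_orthogonal (K := (ℝ ∙ e : Submodule ℝ (EuclideanSpace ℝ (Fin d))))
      rw [hbot, finrank_bot, h1, finrank_euclideanSpace_fin] at h2
      omega
    obtain ⟨v, hvK, hv0⟩ := Submodule.exists_mem_ne_zero_of_ne_bot hKne
    have hvn : (0:ℝ) < ‖v‖ := norm_pos_iff.mpr hv0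
    refine ⟨‖v‖⁻¹ • v, ?_, ?_⟩
    · rw [norm_smul, norm_inv, norm_norm]; field_simp
    · have := (Submodule.mem_orthogonal _ v).mp hvK e (Submodule.mem_span_singleton_self e)
      rw [inner_smul_right, this, mul_zero]
  set c : ℝ := r / (a + r) with hc_def
  have har : 0 < a + r := by linarith
  have hc0 : 0 < c := by rw [hc_def]; positivity
  have hc1 : c ≤ 1 := by rw [hc_def, div_le_one har]; linarith
  have hcar : c * (a + r) = r := by rw [hc_def]; field_simp
  have hcc : c⁻¹ * c = 1 := inv_mul_cancel₀ hc0.ne'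
  have hcc' : c * c⁻¹ = 1 := mul_inv_cancel₀ hc0.ne'
  have hcinv1 : 1 ≤ c⁻¹ := by
    rw [le_inv_comm₀ one_pos hc0]; simpa using hc1
  set κ : ℝ := (a + r) / r ^ 2 with hκ_def
  have hκ0 : 0 < κ := by rw [hκ_def]; positivity
  set θF : ℝ → ℝ := fun s => Real.pi * max 0 (min 1 (κ * (r - s))) with hθ_def
  set K : ℝ := Real.pi * κ with hK_def
  have hK0 : 0 ≤ K := by rw [hK_def]; positivity
  have hθlip : ∀ s t, |θF s - θF t| ≤ K * |s - t| := by
    intro s t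
    calc |θF s - θF t|
        = Real.pi * |max 0 (min 1 (κ*(r-s))) - max 0 (min 1 (κ*(r-t)))| := by
          rw [show θF s - θF t
              = Real.pi * (max 0 (min 1 (κ*(r-s))) - max 0 (min 1 (κ*(r-t)))) by
                simp only [hθ_def]; ring,
            abs_mul, abs_of_nonneg Real.pi_pos.le]
      _ ≤ Real.pi * |κ*(r-s) - κ*(r-t)| :=
          mul_le_mul_of_nonneg_left (clamp_lip _ _) Real.pi_pos.le
      _ = K * |s - t| := by
          rw [show κ*(r-s) - κ*(r-t) = κ*(t - s) by ring, abs_mul, abs_of_pos hκ0,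
            abs_sub_comm t s, hK_def]
          ring
  have hθ0 : ∀ s, r ≤ s → θF s = 0 := by
    intro s hs
    have h1 : κ * (r - s) ≤ 0 := mul_nonpos_of_nonneg_of_nonpos hκ0.le (by linarith)
    have h2 : min 1 (κ*(r-s)) ≤ 0 := le_trans (min_le_right _ _) h1
    simp only [hθ_def, max_eq_left h2, mul_zero]
  have hθpi : θF (c * a) = Real.pi := by
    have h1 : κ * (r - c*a) = 1 := by
      rw [hκ_def, hc_def]; field_simp; ring
    simp only [hθ_def, h1]
    norm_num
  -- the maps
  set A : EuclideanSpace ℝ (Fin d) → EuclideanSpace ℝ (Fin d) := Amap e c with hA_def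
  set A' : EuclideanSpace ℝ (Fin d) → EuclideanSpace ℝ (Fin d) := Amap e c⁻¹ with hA'_def
  set N : EuclideanSpace ℝ (Fin d) → EuclideanSpace ℝ (Fin d) :=
    fun u => rot e f (θF ‖u‖) u with hN_def
  set N' : EuclideanSpace ℝ (Fin d) → EuclideanSpace ℝ (Fin d) :=
    fun u => rot e f (-θF ‖u‖) u with hN'_def
  set τ : EuclideanSpace ℝ (Fin d) → EuclideanSpace ℝ (Fin d) :=
    fun z => m + A' (N (A (z - m))) with hτ_def
  set σ : EuclideanSpace ℝ (Fin d) → EuclideanSpace ℝ (Fin d) :=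
    fun z => m + A' (N' (A (z - m))) with hσ_def
  have hAA : ∀ u, A' (A u) = u := fun u => Amap_Amap he hcc u
  have hAA' : ∀ u, A (A' u) = u := fun u => Amap_Amap he hcc' u
  have hnormN : ∀ u, ‖N u‖ = ‖u‖ := fun u => norm_rot he hf hef _ u
  have hnormN' : ∀ u, ‖N' u‖ = ‖u‖ := fun u => norm_rot he hf hef _ u
  have hNN : ∀ u, N' (N u) = u := by
    intro u
    show rot e f (-θF ‖N u‖) (N u) = u
    rw [hnormN u]
    show rot e f (-θF ‖u‖) (rot e f (θF ‖u‖) u) = u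
    rw [rot_rot he hf hef, neg_add_cancel, rot_zero]
  have hNN' : ∀ u, N (N' u) = u := by
    intro u
    show rot e f (θF ‖N' u‖) (N' u) = u
    rw [hnormN' u]
    show rot e f (θF ‖u‖) (rot e f (-θF ‖u‖) u) = u
    rw [rot_rot he hf hef, add_neg_cancel, rot_zero]
  have hστ : Function.LeftInverse σ τ := by
    intro z
    show m + A' (N' (A ((m + A' (N (A (z - m)))) - m))) = z
    rw [add_sub_cancel_left, hAA', hNN, hAA, add_sub_cancel]
  have hτσ : Function.RightInverse σ τ := by
    intro z
    show m + A' (N (A ((m + A' (N' (A (z - m)))) - m))) = z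
    rw [add_sub_cancel_left, hAA', hNN', hAA, add_sub_cancel]
  -- Lipschitz constants
  set L0 : ℝ := c⁻¹ * (1 + K * r) with hL0_def
  have hL0pos : 0 < L0 := by
    rw [hL0_def]
    have hkr : (0:ℝ) ≤ K * r := mul_nonneg hK0 hr.le
    have : (0:ℝ) < 1 + K * r := by linarith
    exact mul_pos (inv_pos.mpr hc0) this
  have hlipN : ∀ u v, ‖N u - N v‖ ≤ (1 + K*r) * ‖u - v‖ :=
    fun u v => lipN he hf hef θF K r hK0 hr.le hθlip hθ0 u v
  have hlipN' : ∀ u v, ‖N' u - N' v‖ ≤ (1 + K*r) * ‖u - v‖ := by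
    intro u v
    have hlip' : ∀ s t, |(fun s => -θF s) s - (fun s => -θF s) t| ≤ K * |s - t| := by
      intro s t
      simp only
      rw [show -θF s - -θF t = -(θF s - θF t) by ring, abs_neg]
      exact hθlip s t
    have h0' : ∀ s, r ≤ s → (fun s => -θF s) s = 0 := by
      intro s hs; simp only [hθ0 s hs, neg_zero]
    exact lipN he hf hef (fun s => -θF s) K r hK0 hr.le hlip' h0' u v
  have hlipgen : ∀ (M : EuclideanSpace ℝ (Fin d) → EuclideanSpace ℝ (Fin d)),
      (∀ u v, ‖M u - M v‖ ≤ (1 + K*r) * ‖u - v‖) →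
      ∀ z z', ‖(m + A' (M (A (z - m)))) - (m + A' (M (A (z' - m))))‖ ≤ L0 * ‖z - z'‖ := by
    intro M hM z z'
    rw [add_sub_add_left_eq_sub, ← Amap_sub]
    calc ‖Amap e c⁻¹ (M (A (z - m)) - M (A (z' - m)))‖
        ≤ c⁻¹ * ‖M (A (z - m)) - M (A (z' - m))‖ :=
          norm_Amap_le_big he hf hef hcinv1 _
      _ ≤ c⁻¹ * ((1 + K*r) * ‖A (z - m) - A (z' - m)‖) := by
          apply mul_le_mul_of_nonneg_left (hM _ _) (by positivity)
      _ ≤ c⁻¹ * ((1 + K*r) * ‖z - z'‖) := by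
          apply mul_le_mul_of_nonneg_left _ (by positivity)
          apply mul_le_mul_of_nonneg_left _ (by have := mul_nonneg hK0 hr.le; linarith)
          rw [hA_def, ← Amap_sub, sub_sub_sub_cancel_right]
          exact norm_Amap_le_one he hf hef hc0.le hc1 _
      _ = L0 * ‖z - z'‖ := by rw [hL0_def]; ring
  have hlipτ : ∀ z z', ‖τ z - τ z'‖ ≤ L0 * ‖z - z'‖ := fun z z' => hlipgen N hlipN z z'
  have hlipσ : ∀ z z', ‖σ z - σ z'‖ ≤ L0 * ‖z - z'‖ := fun z z' => hlipgen N' hlipN' z z'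
  -- the target Lipschitz constant
  set L : ℝ := 4 * ‖y - x‖ ^ 2 / r ^ 2 with hL_def
  have hLpos : 0 < L := by rw [hL_def]; positivity
  have hL0L : L0 ≤ L := by
    have hpi : Real.pi < 3.15 := Real.pi_lt_d2
    have hceq : c⁻¹ = (a + r) / r := by rw [hc_def, inv_div]
    have h1 : L0 = ((a+r) * (r + Real.pi * (a+r))) / r^2 := by
      rw [hL0_def, hceq, hK_def, hκ_def]
      field_simp
    have h3 : a + r ≤ 2*a := by linarith
    have h4 : r + Real.pi*(a+r) ≤ r + 3.15*(2*a) := by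
      have : Real.pi*(a+r) ≤ 3.15*(2*a) :=
        mul_le_mul hpi.le h3 (by linarith) (by norm_num)
      linarith
    have h2 : (a+r) * (r + Real.pi*(a+r)) ≤ 4*(2*a)^2 := by
      have h5 : (a+r)*(r + Real.pi*(a+r)) ≤ (2*a)*(r + 3.15*(2*a)) := by
        apply mul_le_mul h3 h4 _ (by linarith)
        positivity
      nlinarith [mul_le_mul_of_nonneg_left hra (by linarith : (0:ℝ) ≤ 2*a)]
    rw [h1, hL_def, hna]
    exact div_le_div_of_nonneg_right h2 (by positivity)
  refine ⟨τ, Function.bijective_iff_has_inverse.mpr ⟨σ, hστ, hτσ⟩, ?_, ?_, ?_, ?_⟩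
  · -- bilipschitz
    intro z _ z' _
    constructor
    · have h1 : ‖z - z'‖ ≤ L * ‖τ z - τ z'‖ := by
        calc ‖z - z'‖ = ‖σ (τ z) - σ (τ z')‖ := by rw [hστ z, hστ z']
          _ ≤ L0 * ‖τ z - τ z'‖ := hlipσ _ _
          _ ≤ L * ‖τ z - τ z'‖ := mul_le_mul_of_nonneg_right hL0L (norm_nonneg _)
      rw [dist_eq_norm, dist_eq_norm]
      calc L⁻¹ * ‖z - z'‖ ≤ L⁻¹ * (L * ‖τ z - τ z'‖) :=
            mul_le_mul_of_nonneg_left h1 (by positivity)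
        _ = ‖τ z - τ z'‖ := by
            rw [← mul_assoc, inv_mul_cancel₀ hLpos.ne', one_mul]
    · rw [dist_eq_norm, dist_eq_norm]
      calc ‖τ z - τ z'‖ ≤ L0 * ‖z - z'‖ := hlipτ _ _
        _ ≤ L * ‖z - z'‖ := mul_le_mul_of_nonneg_right hL0L (norm_nonneg _)
  · -- fixed outside the thickening
    intro z hz
    by_cases hcase : ‖A (z - m)‖ < r
    · exfalso
      apply hz
      -- ellipsoid ⊆ stadium
      set w : EuclideanSpace ℝ (Fin d) := z - m - ⟪e, z - m⟫ • e with hw_def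
      set p : ℝ := ⟪e, z - m⟫ with hp_def
      have hee : ⟪e, e⟫ = 1 := by rw [real_inner_self_eq_norm_sq, he]; norm_num
      have hew : ⟪e, w⟫ = 0 := by
        rw [hw_def, inner_sub_right, inner_smul_right, hee, ← hp_def]
        ring
      have hArep : A (z - m) = w + (c * p) • e := by
        show Amap e c (z - m) = w + (c * p) • e
        rw [Amap, hw_def, ← hp_def]
        module
      have hAn : ‖A (z - m)‖^2 = ‖w‖^2 + (c*p)^2 := by
        rw [hArep, norm_comb' he hf hef, hew]
        ring
      have hlt : ‖w‖^2 + (c*p)^2 < r^2 := by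
        rw [← hAn]
        have := pow_lt_pow_left₀ hcase (norm_nonneg _) (n := 2) (by norm_num)
        exact this
      set t : ℝ := max (-a) (min a p) with ht_def
      have hta1 : -a ≤ t := le_max_left _ _
      have hta2 : t ≤ a := max_le (by linarith) (min_le_left _ _)
      have hdrep : z - (m + t • e) = w + (p - t) • e := by
        rw [hw_def]; module
      have hdist2 : ‖z - (m + t • e)‖^2 < r^2 := by
        rw [hdrep, norm_comb' he hf hef, hew]
        have := ellipsoid_key ha hr hc0 hcar hlt (sq_nonneg ‖w‖)
        rw [← ht_def] at this
        linarith
      have hdist : dist z (m + t • e) < r := by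
        rw [dist_eq_norm]
        exact lt_of_sq_lt_sq' hdist2 (norm_nonneg _) hr.le
      have hmem : m + t • e ∈ segment ℝ x y := by
        rw [segment_eq_image']
        refine ⟨(a + t)/(2*a), ⟨div_nonneg (by linarith) (by linarith), ?_⟩, ?_⟩
        · rw [div_le_one (by positivity)]; linarith
        · show x + ((a + t)/(2*a)) • (y - x) = m + t • e
          rw [hm_def, he_def, hna, smul_smul]
          match_scalars <;> field_simp <;> ring
      exact Metric.mem_thickening_iff.mpr ⟨m + t • e, hmem, hdist⟩
    · push_neg at hcase
      have h0 : θF ‖A (z - m)‖ = 0 := hθ0 _ hcase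
      show m + A' (N (A (z - m))) = z
      have hNfix : N (A (z - m)) = A (z - m) := by
        show rot e f (θF ‖A (z - m)‖) (A (z - m)) = A (z - m)
        rw [h0, rot_zero]
      rw [hNfix, hAA, add_sub_cancel]
  · -- τ x = y
    have hxm : x - m = (-a) • e := by
      rw [hm_def, he_def, hna, smul_smul]
      match_scalars <;> field_simp <;> ring
    show m + A' (N (A (x - m))) = y
    rw [hxm]
    have h1 : A ((-a) • e) = (c * -a) • e := Amap_smul_e he c (-a)
    rw [h1]
    have h2 : ‖(c * -a) • e‖ = c * a := by
      rw [norm_smul, he, mul_one, Real.norm_eq_abs, abs_mul, abs_neg, abs_of_pos hc0, abs_of_pos ha]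
    have h4 : N ((c * -a) • e) = (c * a) • e := by
      show rot e f (θF ‖(c * -a) • e‖) ((c * -a) • e) = (c * a) • e
      rw [h2, hθpi, rot_smul_e he hf hef]
      rw [Real.cos_pi, Real.sin_pi]
      match_scalars <;> ring
    rw [h4, hA'_def, Amap_smul_e he c⁻¹ (c*a), ← mul_assoc, hcc, one_mul]
    rw [hm_def, he_def, hna, smul_smul]
    match_scalars <;> field_simp <;> ring
  · -- τ y = x
    have hym : y - m = a • e := by
      rw [hm_def, he_def, hna, smul_smul]
      match_scalars <;> field_simp <;> ring
    show m + A' (N (A (y - m))) = x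
    rw [hym]
    have h1 : A (a • e) = (c * a) • e := Amap_smul_e he c a
    rw [h1]
    have h2 : ‖(c * a) • e‖ = c * a := by
      rw [norm_smul, he, mul_one, Real.norm_eq_abs, abs_mul, abs_of_pos hc0, abs_of_pos ha]
    have h4 : N ((c * a) • e) = (c * -a) • e := by
      show rot e f (θF ‖(c * a) • e‖) ((c * a) • e) = (c * -a) • e
      rw [h2, hθpi, rot_smul_e he hf hef]
      rw [Real.cos_pi, Real.sin_pi]
      match_scalars <;> ring
    rw [h4, hA'_def, Amap_smul_e he c⁻¹ (c * -a), ← mul_assoc, hcc, one_mul]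
    rw [hm_def, he_def, hna, smul_smul]
    match_scalars <;> field_simp <;> ring
end

section
/- Let d ≥ 2, r > 0, and A ⊆ ℝ^d be an r-separated set (all pairwise distances in A are at least r). Then there exists a K-bilipschitz bijection Φ : ℝ^d → ℝ^d with K = 16·max{3d/r, 1} such that Φ(A) ⊆ ℤ^d. -/
/-- The integer lattice `ℤ^d` inside `ℝ^d`. -/
def intLattice (d : ℕ) : Set (EuclideanSpace ℝ (Fin d)) :=
  {x | ∀ i, ∃ z : ℤ, x i = z}

/-!
Scale `A` by `2M`, `M = max (3d/r) 1`, so that it becomes `2R`-separated with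
`R = M r ≥ 3d ≥ √d`. Each point `s` of the scaled set is to be moved to its coordinatewise
rounding, a displacement of norm at most `√d / 2 ≤ R / 2`. Points of the ball `B(s, R)` are moved
by that displacement damped linearly to `0` at the boundary; as the balls are disjoint, this
perturbation of the identity is `1/2`-Lipschitz, so the identity plus it is bilipschitz, and onto
by the contraction principle.
-/

open Set Function
open scoped NNReal

namespace LipschitzWith

variable {E : Type*} [NormedAddCommGroup E] {g : E → E} {K : ℝ≥0}

lemma dist_id_add_le (hg : LipschitzWith K g) (x y : E) :
    dist (x + g x) (y + g y) ≤ (1 + K) * dist x y :=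
  calc dist (x + g x) (y + g y) ≤ dist x y + dist (g x) (g y) := dist_add_add_le _ _ _ _
    _ ≤ dist x y + K * dist x y := by grw [hg.dist_le_mul x y]
    _ = (1 + K) * dist x y := by ring

lemma le_dist_id_add (hg : LipschitzWith K g) (x y : E) :
    (1 - K) * dist x y ≤ dist (x + g x) (y + g y) := by
  have : dist x y ≤ dist (x + g x) (y + g y) + dist (g x) (g y) := by
    simpa using dist_sub_sub_le (x + g x) (g x) (y + g y) (g y)
  linarith [hg.dist_le_mul x y]

lemma bijective_id_add [CompleteSpace E] (hg : LipschitzWith K g) (hK : K < 1) :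
    Bijective fun x => x + g x := by
  refine ⟨(AntilipschitzWith.id.add_lipschitzWith hg (by rwa [inv_one])).injective, fun y => ?_⟩
  have hcontr : ContractingWith K fun x => y - g x :=
    ⟨hK, by simpa using (LipschitzWith.const y).sub hg⟩
  have : Nonempty E := ⟨y⟩
  exact ⟨_, eq_sub_iff_add_eq.1 hcontr.fixedPoint_isFixedPt.symm⟩

end LipschitzWith

section BumpField

variable {E : Type*} [NormedAddCommGroup E] [NormedSpace ℝ E] {S : Set E} {R : ℝ} {v : E → E}
  {s x : E}

-- For a `2R`-separated `S` the centre within distance `R` is unique, see `bumpField_eq_of_dist_lt`.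
open Classical in
noncomputable def bumpField (S : Set E) (R : ℝ) (v : E → E) (x : E) : E :=
  if h : ∃ s ∈ S, dist x s < R then (1 - dist x h.choose / R) • v h.choose else 0

lemma bumpField_eq_of_dist_lt (hS : S.Pairwise fun s t => 2 * R ≤ dist s t) (hs : s ∈ S)
    (hx : dist x s < R) : bumpField S R v x = (1 - dist x s / R) • v s := by
  have h : ∃ t ∈ S, dist x t < R := ⟨s, hs, hx⟩
  obtain ⟨ht, hxt⟩ := h.choose_spec
  have hcenter : h.choose = s := by
    by_contra hne
    linarith [hS ht hs hne, dist_triangle_left h.choose s x]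
  rw [bumpField, dif_pos h, hcenter]

lemma bumpField_eq_zero (hx : ∀ s ∈ S, R ≤ dist x s) : bumpField S R v x = 0 := by
  rw [bumpField, dif_neg (by simpa using hx)]

lemma bumpField_apply_of_mem (hS : S.Pairwise fun s t => 2 * R ≤ dist s t) (hR : 0 < R)
    (hs : s ∈ S) : bumpField S R v s = v s := by
  simp [bumpField_eq_of_dist_lt (x := s) hS hs (by rwa [dist_self])]

lemma norm_bumpField_le_of_dist_lt (hS : S.Pairwise fun s t => 2 * R ≤ dist s t)
    (hv : ∀ s ∈ S, ‖v s‖ ≤ R / 2) (hs : s ∈ S) (hx : dist x s < R) :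
    ‖bumpField S R v x‖ ≤ (R - dist x s) / 2 := by
  have hR : 0 < R := dist_nonneg.trans_lt hx
  have hweight : 0 ≤ 1 - dist x s / R := by rw [sub_nonneg, div_le_one hR]; exact hx.le
  rw [bumpField_eq_of_dist_lt hS hs hx, norm_smul, Real.norm_of_nonneg hweight]
  calc (1 - dist x s / R) * ‖v s‖ ≤ (1 - dist x s / R) * (R / 2) := by grw [hv s hs]
    _ = (R - dist x s) / 2 := by field_simp

lemma norm_bumpField_le (hS : S.Pairwise fun s t => 2 * R ≤ dist s t)
    (hv : ∀ s ∈ S, ‖v s‖ ≤ R / 2) (hs : s ∈ S) (x : E) :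
    ‖bumpField S R v x‖ ≤ |R - dist x s| / 2 := by
  by_cases hx : ∃ t ∈ S, dist x t < R
  · obtain ⟨t, ht, hxt⟩ := hx
    refine (norm_bumpField_le_of_dist_lt hS hv ht hxt).trans ?_
    rcases eq_or_ne t s with rfl | hts
    · grw [← le_abs_self]
    · linarith [hS ht hs hts, dist_triangle_left t s x, neg_abs_le (R - dist x s)]
  · push Not at hx
    rw [bumpField_eq_zero hx, norm_zero]
    positivity

lemma lipschitzWith_bumpField (hS : S.Pairwise fun s t => 2 * R ≤ dist s t)
    (hv : ∀ s ∈ S, ‖v s‖ ≤ R / 2) : LipschitzWith (1 / 2) (bumpField S R v) := by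
  have across : ∀ {x y s}, s ∈ S → dist x s < R → R ≤ dist y s →
      dist (bumpField S R v x) (bumpField S R v y) ≤ 1 / 2 * dist x y := by
    intro x y s hs hx hy
    have hbx := norm_bumpField_le hS hv hs x
    have hby := norm_bumpField_le hS hv hs y
    rw [abs_of_pos (sub_pos.2 hx)] at hbx
    rw [abs_of_nonpos (sub_nonpos.2 hy)] at hby
    linarith [dist_le_norm_add_norm (bumpField S R v x) (bumpField S R v y),
      dist_triangle y x s, dist_comm x y]
  refine LipschitzWith.of_dist_le_mul fun x y => ?_
  push_cast
  by_cases hx : ∃ s ∈ S, dist x s < R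
  · obtain ⟨s, hs, hxs⟩ := hx
    by_cases hys : dist y s < R
    · have hR : 0 < R := dist_nonneg.trans_lt hxs
      rw [bumpField_eq_of_dist_lt hS hs hxs, bumpField_eq_of_dist_lt hS hs hys, dist_eq_norm,
        ← sub_smul, norm_smul, Real.norm_eq_abs,
        show 1 - dist x s / R - (1 - dist y s / R) = (dist y s - dist x s) / R by ring,
        abs_div, abs_of_pos hR]
      calc |dist y s - dist x s| / R * ‖v s‖ ≤ dist x y / R * (R / 2) := by
            grw [abs_dist_sub_le y x s, dist_comm y x, hv s hs]
        _ = 1 / 2 * dist x y := by field_simp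
    · exact across hs hxs (not_lt.1 hys)
  by_cases hy : ∃ s ∈ S, dist y s < R
  · obtain ⟨s, hs, hys⟩ := hy
    push Not at hx
    rw [dist_comm, dist_comm x]
    exact across hs hys (hx s hs)
  push Not at hx hy
  simp [bumpField_eq_zero hx, bumpField_eq_zero hy]

theorem exists_bijective_isBilipOn_eqOn [CompleteSpace E] (hR : 0 < R)
    (hS : S.Pairwise fun s t => 2 * R ≤ dist s t) {f : E → E}
    (hf : ∀ s ∈ S, ‖f s - s‖ ≤ R / 2) :
    ∃ Ψ : E → E, Bijective Ψ ∧ IsBilipOn 2 Ψ univ ∧ EqOn Ψ f S := by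
  have hg := lipschitzWith_bumpField (v := fun x => f x - x) hS hf
  refine ⟨fun x => x + bumpField S R (fun x => f x - x) x, hg.bijective_id_add (by norm_num),
    fun x _ y _ => ⟨?_, ?_⟩, fun s hs => ?_⟩
  · calc 2⁻¹ * dist x y = (1 - ((1 / 2 : ℝ≥0) : ℝ)) * dist x y := by norm_num
      _ ≤ _ := hg.le_dist_id_add x y
  · calc _ ≤ (1 + ((1 / 2 : ℝ≥0) : ℝ)) * dist x y := hg.dist_id_add_le x y
      _ ≤ 2 * dist x y := by gcongr; norm_num
  · simp only [bumpField_apply_of_mem hS hR hs, add_sub_cancel]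

end BumpField

section LatticeRounding

variable {d : ℕ}

noncomputable def latticeRound (x : EuclideanSpace ℝ (Fin d)) : EuclideanSpace ℝ (Fin d) :=
  WithLp.toLp 2 fun i => (round (x i) : ℝ)

lemma latticeRound_mem_intLattice (x : EuclideanSpace ℝ (Fin d)) :
    latticeRound x ∈ intLattice d :=
  fun i => ⟨round (x i), rfl⟩

lemma norm_latticeRound_sub_le (x : EuclideanSpace ℝ (Fin d)) :
    ‖latticeRound x - x‖ ≤ √d / 2 := by
  rw [EuclideanSpace.norm_eq, Real.sqrt_le_left (by positivity), div_pow,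
    Real.sq_sqrt d.cast_nonneg]
  calc ∑ i, ‖(latticeRound x - x) i‖ ^ 2 ≤ ∑ _i : Fin d, (1 / 2 : ℝ) ^ 2 := by
        gcongr with i
        rw [Real.norm_eq_abs, PiLp.sub_apply, abs_sub_comm]
        exact abs_sub_round (x i)
    _ = d / 2 ^ 2 := by simp [div_eq_mul_inv]

end LatticeRounding

theorem stmt_6_general (d : ℕ) (r : ℝ) (hr : 0 < r)
    (A : Set (EuclideanSpace ℝ (Fin d)))
    (hsep : ∀ a ∈ A, ∀ b ∈ A, a ≠ b → r ≤ dist a b) :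
    ∃ Φ : EuclideanSpace ℝ (Fin d) → EuclideanSpace ℝ (Fin d),
      Function.Bijective Φ ∧
      IsBilipOn (16 * max (3 * d / r) 1) Φ Set.univ ∧
      Φ '' A ⊆ intLattice d := by
  set M := max (3 * d / r) 1
  have hM : 1 ≤ M := le_max_right _ _
  have hc : (2 * M : ℝ) ≠ 0 := by positivity
  have hsqrt : √d ≤ M * r :=
    calc √d ≤ 3 * d := Real.sqrt_le_left (by positivity) |>.2 <| by
          norm_cast; nlinarith
      _ = 3 * d / r * r := (div_mul_cancel₀ _ hr.ne').symm
      _ ≤ M * r := by gcongr; exact le_max_left _ _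
  have hsepS : ((2 * M) • ·) '' A |>.Pairwise fun s t => 2 * (M * r) ≤ dist s t := by
    rintro _ ⟨a, ha, rfl⟩ _ ⟨b, hb, rfl⟩ hne
    rw [dist_smul₀, Real.norm_of_nonneg (by positivity), ← mul_assoc]
    gcongr
    exact hsep a ha b hb (ne_of_apply_ne _ hne)
  obtain ⟨Ψ, hΨ, hΨbilip, hΨround⟩ := exists_bijective_isBilipOn_eqOn (by positivity) hsepS
    (f := latticeRound) fun s _ => (norm_latticeRound_sub_le s).trans (by linarith)
  refine ⟨Ψ ∘ ((2 * M) • ·), hΨ.comp (Homeomorph.smulOfNeZero _ hc).bijective,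
    fun x _ y _ => ?_, ?_⟩
  · obtain ⟨hlo, hup⟩ := hΨbilip ((2 * M) • x) trivial ((2 * M) • y) trivial
    rw [dist_smul₀, Real.norm_of_nonneg (by positivity)] at hlo hup
    have hinv : (16 * M)⁻¹ ≤ M :=
      inv_le_of_inv_le₀ (by positivity) (by grw [inv_le_one_of_one_le₀ hM]; linarith)
    constructor <;> simp only [comp_apply] <;> nlinarith [dist_nonneg (x := x) (y := y)]
  · rintro _ ⟨a, ha, rfl⟩
    rw [comp_apply, hΨround (mem_image_of_mem _ ha)]
    exact latticeRound_mem_intLattice _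

theorem stmt_6 (d : ℕ) (hd : 2 ≤ d) (r : ℝ) (hr : 0 < r)
    (A : Set (EuclideanSpace ℝ (Fin d)))
    (hsep : ∀ a ∈ A, ∀ b ∈ A, a ≠ b → r ≤ dist a b) :
    ∃ Φ : EuclideanSpace ℝ (Fin d) → EuclideanSpace ℝ (Fin d),
      Function.Bijective Φ ∧
      IsBilipOn (16 * max (3 * d / r) 1) Φ Set.univ ∧
      Φ '' A ⊆ intLattice d :=
  stmt_6_general d r hr A hsep
end

section
/- Let d ≥ 2, L ≥ 1, X ⊆ ℤ^d, and f : X → ℝ^d be L-bilipschitz. Suppose there exists λ ≥ 1 such that every point of ℝ^d lies within distance λ of some point of X. Then there exists an injective extension F : ℤ^d → ℝ^d of f with Lip(F) ≤ 4λL and Lip(F⁻¹) ≤ 24λ²L√d. -/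
lemma PiLp.exists_apply_ne {r : ENNReal} {ι : Type*} {β : ι → Type*} {p q : PiLp r β}
    (h : p ≠ q) : ∃ i, p i ≠ q i := by
  by_contra! h'
  exact h (PiLp.ext h')

lemma one_le_dist_of_mem_intLattice {d : ℕ} {p q : EuclideanSpace ℝ (Fin d)}
    (hp : p ∈ intLattice d) (hq : q ∈ intLattice d) (hne : p ≠ q) : 1 ≤ dist p q := by
  obtain ⟨i, hi⟩ := PiLp.exists_apply_ne hne
  obtain ⟨zp, hzp⟩ := hp i
  obtain ⟨zq, hzq⟩ := hq i
  have hz : zp - zq ≠ 0 := sub_ne_zero.mpr fun h => hi (by rw [hzp, hzq, h])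
  calc (1 : ℝ) ≤ |(zp : ℝ) - zq| := by exact_mod_cast Int.one_le_abs hz
    _ = dist (p i) (q i) := by rw [Real.dist_eq, hzp, hzq]
    _ ≤ dist p q := PiLp.dist_apply_le p q i

lemma exists_retraction_of_forall_exists_dist_le {α : Type*} [PseudoMetricSpace α] {X : Set α}
    {lam : ℝ} (hlam : 0 ≤ lam) (hnet : ∀ p : α, ∃ x ∈ X, dist p x ≤ lam) :
    ∃ n : α → α, (∀ p, n p ∈ X) ∧ (∀ p, dist p (n p) ≤ lam) ∧ ∀ x ∈ X, n x = x := by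
  classical
  choose m hmX hm using hnet
  refine ⟨fun p => if p ∈ X then p else m p, fun p => ?_, fun p => ?_, fun x hx => if_pos hx⟩
  · dsimp only
    split_ifs with h
    exacts [h, hmX p]
  · dsimp only
    split_ifs
    exacts [by simpa using hlam, hm p]

section NetExtension

variable {E : Type*} [NormedAddCommGroup E] [NormedSpace ℝ E]

def netExtension (f n : E → E) (c : ℝ) (p : E) : E :=
  f (n p) + c • (p - n p)

variable {f n : E → E} {c lam : ℝ}

lemma netExtension_eq_of_map_eq {x : E} (hx : n x = x) : netExtension f n c x = f x := by
  simp [netExtension, hx]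

lemma dist_netExtension_eq_of_map_eq (hc : 0 ≤ c) {p q : E} (h : n p = n q) :
    dist (netExtension f n c p) (netExtension f n c q) = c * dist p q := by
  simp only [netExtension, h, dist_add_left, dist_smul₀, Real.norm_of_nonneg hc, dist_sub_right]

lemma abs_dist_netExtension_sub_le (hc : 0 ≤ c) (hn : ∀ p, dist p (n p) ≤ lam) (p q : E) :
    |dist (netExtension f n c p) (netExtension f n c q) - dist (f (n p)) (f (n q))|
      ≤ c * (2 * lam) := by
  set w := c • ((p - n p) - (q - n q))
  have hsub : netExtension f n c p - netExtension f n c q = (f (n p) - f (n q)) + w := by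
    simp only [netExtension, w]
    module
  have hw : ‖(p - n p) - (q - n q)‖ ≤ 2 * lam := by
    have := norm_sub_le (p - n p) (q - n q)
    rw [← dist_eq_norm p, ← dist_eq_norm q] at this
    linarith [hn p, hn q]
  rw [dist_eq_norm, dist_eq_norm, hsub]
  calc _ ≤ ‖w‖ := by simpa using abs_norm_sub_norm_le (f (n p) - f (n q) + w) (f (n p) - f (n q))
    _ = c * ‖(p - n p) - (q - n q)‖ := by rw [norm_smul, Real.norm_of_nonneg hc]
    _ ≤ c * (2 * lam) := by gcongr

variable {S X : Set E} {L : ℝ}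

lemma dist_netExtension_le (hL : 1 ≤ L) (hlam : 1 ≤ lam)
    (hS : ∀ p ∈ S, ∀ q ∈ S, p ≠ q → 1 ≤ dist p q) (hnX : ∀ p, n p ∈ X)
    (hn : ∀ p, dist p (n p) ≤ lam) (hf : ∀ x ∈ X, ∀ y ∈ X, dist (f x) (f y) ≤ L * dist x y)
    {p q : E} (hp : p ∈ S) (hq : q ∈ S) :
    dist (netExtension f n (4 * lam * L)⁻¹ p) (netExtension f n (4 * lam * L)⁻¹ q)
      ≤ 4 * lam * L * dist p q := by
  rcases eq_or_ne p q with rfl | hpq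
  · simp
  have hpq1 := hS p hp q hq hpq
  have hnn : dist (n p) (n q) ≤ dist p q + 2 * lam := by
    linarith [dist_triangle4 (n p) p q (n q), dist_comm p (n p), hn p, hn q]
  have hpert := (abs_le.mp
    (abs_dist_netExtension_sub_le (f := f) (c := (4 * lam * L)⁻¹) (by positivity) hn p q)).2
  have hc : (4 * lam * L)⁻¹ * (2 * lam) ≤ 1 := by
    rw [inv_mul_le_one₀ (by positivity)]
    nlinarith
  calc _ ≤ dist (f (n p)) (f (n q)) + 1 := by linarith
    _ ≤ L * (dist p q + 2 * lam) + 1 := by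
      gcongr
      exact (hf _ (hnX p) _ (hnX q)).trans (by gcongr)
    _ ≤ 4 * lam * L * dist p q := by
      nlinarith [mul_le_mul_of_nonneg_left hpq1 (by positivity : 0 ≤ lam * L),
        mul_le_mul_of_nonneg_right hlam (by positivity : 0 ≤ L * dist p q)]

variable (hL : 1 ≤ L) (hlam : 1 ≤ lam) (hS : ∀ p ∈ S, ∀ q ∈ S, p ≠ q → 1 ≤ dist p q)
  (hXS : X ⊆ S) (hnX : ∀ p, n p ∈ X) (hn : ∀ p, dist p (n p) ≤ lam)
  (hf : ∀ x ∈ X, ∀ y ∈ X, L⁻¹ * dist x y ≤ dist (f x) (f y))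
include hL hlam hS hXS hnX hn hf

lemma inv_le_dist_netExtension {p q : E} (hp : p ∈ S) (hq : q ∈ S) (hpq : p ≠ q) :
    (4 * lam * L)⁻¹
      ≤ dist (netExtension f n (4 * lam * L)⁻¹ p) (netExtension f n (4 * lam * L)⁻¹ q) := by
  by_cases hnn : n p = n q
  · rw [dist_netExtension_eq_of_map_eq (by positivity) hnn]
    exact le_mul_of_one_le_right (by positivity) (hS p hp q hq hpq)
  have hfnn : L⁻¹ ≤ dist (f (n p)) (f (n q)) :=
    calc L⁻¹ = L⁻¹ * 1 := (mul_one _).symm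
      _ ≤ L⁻¹ * dist (n p) (n q) := by
        gcongr
        exact hS _ (hXS (hnX p)) _ (hXS (hnX q)) hnn
      _ ≤ _ := hf _ (hnX p) _ (hnX q)
  have hpert := (abs_le.mp
    (abs_dist_netExtension_sub_le (f := f) (c := (4 * lam * L)⁻¹) (by positivity) hn p q)).1
  have hc : (4 * lam * L)⁻¹ * (2 * lam) = (2 * L)⁻¹ := by
    field_simp
    ring
  have hc' : (4 * lam * L)⁻¹ ≤ (2 * L)⁻¹ := inv_anti₀ (by positivity) (by nlinarith)
  have hhalf : L⁻¹ - (2 * L)⁻¹ = (2 * L)⁻¹ := by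
    field_simp
    ring
  linarith

lemma dist_le_dist_netExtension {p q : E} (hp : p ∈ S) (hq : q ∈ S) :
    dist p q ≤ 24 * lam ^ 2 * L *
      dist (netExtension f n (4 * lam * L)⁻¹ p) (netExtension f n (4 * lam * L)⁻¹ q) := by
  rcases eq_or_ne p q with rfl | hpq
  · simp
  set δ := dist (netExtension f n (4 * lam * L)⁻¹ p) (netExtension f n (4 * lam * L)⁻¹ q)
  have hL0 : 0 < L := by linarith
  have hsep : 1 ≤ 4 * lam * L * δ := by
    have := inv_le_dist_netExtension hL hlam hS hXS hnX hn hf hp hq hpq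
    rwa [inv_le_iff_one_le_mul₀' (by positivity)] at this
  have hnn : dist p q ≤ dist (n p) (n q) + 2 * lam := by
    linarith [dist_triangle4 p (n p) (n q) q, dist_comm q (n q), hn p, hn q]
  have hfnn : dist (n p) (n q) ≤ L * dist (f (n p)) (f (n q)) :=
    (inv_mul_le_iff₀ hL0).mp (hf _ (hnX p) _ (hnX q))
  have hpert := (abs_le.mp
    (abs_dist_netExtension_sub_le (f := f) (c := (4 * lam * L)⁻¹) (by positivity) hn p q)).1
  have hc : L * ((4 * lam * L)⁻¹ * (2 * lam)) = 2⁻¹ := by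
    field_simp
    ring
  have hδ : 0 ≤ δ := dist_nonneg
  calc dist p q ≤ L * δ + (2⁻¹ + 2 * lam) := by nlinarith
    _ ≤ L * δ + (2⁻¹ + 2 * lam) * (4 * lam * L * δ) := by nlinarith
    _ ≤ 24 * lam ^ 2 * L * δ := by
      nlinarith [mul_le_mul_of_nonneg_right hlam (by positivity : 0 ≤ L * δ),
        mul_le_mul_of_nonneg_right hlam (by positivity : 0 ≤ lam * L * δ)]

end NetExtension

theorem stmt_8_general (d : ℕ) (L lam : ℝ) (hL : 1 ≤ L) (hlam : 1 ≤ lam)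
    (X : Set (EuclideanSpace ℝ (Fin d))) (hX : X ⊆ intLattice d)
    (f : EuclideanSpace ℝ (Fin d) → EuclideanSpace ℝ (Fin d))
    (hf : ∀ x ∈ X, ∀ y ∈ X,
      L⁻¹ * dist x y ≤ dist (f x) (f y) ∧ dist (f x) (f y) ≤ L * dist x y)
    (hnet : ∀ p : EuclideanSpace ℝ (Fin d), ∃ x ∈ X, dist p x ≤ lam) :
    ∃ F : EuclideanSpace ℝ (Fin d) → EuclideanSpace ℝ (Fin d),
      (∀ x ∈ X, F x = f x) ∧
      Set.InjOn F (intLattice d) ∧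
      (∀ p ∈ intLattice d, ∀ q ∈ intLattice d,
        dist (F p) (F q) ≤ 4 * lam * L * dist p q) ∧
      (∀ p ∈ intLattice d, ∀ q ∈ intLattice d,
        dist p q ≤ 24 * lam ^ 2 * L * Real.sqrt d * dist (F p) (F q)) := by
  obtain ⟨n, hnX, hn, hnfix⟩ := exists_retraction_of_forall_exists_dist_le (by linarith) hnet
  have hS : ∀ p ∈ intLattice d, ∀ q ∈ intLattice d, p ≠ q → 1 ≤ dist p q :=
    fun p hp q hq => one_le_dist_of_mem_intLattice hp hq
  have hf_ge := fun x hx y hy => (hf x hx y hy).1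
  have hf_le := fun x hx y hy => (hf x hx y hy).2
  refine ⟨netExtension f n (4 * lam * L)⁻¹, fun x hx => netExtension_eq_of_map_eq (hnfix x hx),
    fun p hp q hq hFpq => ?_, fun p hp q hq => dist_netExtension_le hL hlam hS hnX hn hf_le hp hq,
    fun p hp q hq => ?_⟩
  · by_contra hpq
    refine (inv_le_dist_netExtension hL hlam hS hX hnX hn hf_ge hp hq hpq).not_gt ?_
    rw [hFpq, dist_self]
    positivity
  · rcases eq_or_ne p q with rfl | hpq
    · simp
    have hd : 1 ≤ Real.sqrt d :=
      Real.one_le_sqrt.mpr (by exact_mod_cast (PiLp.exists_apply_ne hpq).choose.pos)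
    calc dist p q ≤ 24 * lam ^ 2 * L * _ :=
          dist_le_dist_netExtension hL hlam hS hX hnX hn hf_ge hp hq
      _ ≤ _ := mul_le_mul_of_nonneg_right (le_mul_of_one_le_right (by positivity) hd) dist_nonneg

theorem stmt_8 (d : ℕ) (hd : 2 ≤ d) (L lam : ℝ) (hL : 1 ≤ L) (hlam : 1 ≤ lam)
    (X : Set (EuclideanSpace ℝ (Fin d))) (hX : X ⊆ intLattice d)
    (f : EuclideanSpace ℝ (Fin d) → EuclideanSpace ℝ (Fin d))
    (hf : ∀ x ∈ X, ∀ y ∈ X,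
      L⁻¹ * dist x y ≤ dist (f x) (f y) ∧ dist (f x) (f y) ≤ L * dist x y)
    (hnet : ∀ p : EuclideanSpace ℝ (Fin d), ∃ x ∈ X, dist p x ≤ lam) :
    ∃ F : EuclideanSpace ℝ (Fin d) → EuclideanSpace ℝ (Fin d),
      (∀ x ∈ X, F x = f x) ∧
      Set.InjOn F (intLattice d) ∧
      (∀ p ∈ intLattice d, ∀ q ∈ intLattice d,
        dist (F p) (F q) ≤ 4 * lam * L * dist p q) ∧
      (∀ p ∈ intLattice d, ∀ q ∈ intLattice d,
        dist p q ≤ 24 * lam ^ 2 * L * Real.sqrt d * dist (F p) (F q)) :=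
  stmt_8_general d L lam hL hlam X hX f hf hnet
end

section
/- Let d ≥ 1. The following are equivalent: (i) every bilipschitz map f : ℤ^d → ℝ^d extends to a bilipschitz map F : ℝ^d → ℝ^d; (ii) for every separated net A of ℝ^d, every bilipschitz map f : A → ℝ^d extends to a bilipschitz map F : ℝ^d → ℝ^d. Moreover, if (i) holds with bilip(F) ≤ C_d(bilip(f)) for a monotone increasing function C_d : [1,∞) → [1,∞), then (ii) holds with bilip(F) ≤ K·C_d(24√d·R²·K³·bilip(f)), where K := 16·max{3d/r, 1} and r, R are the separation and net constants of A. -/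
/-- Every bilipschitz map of `A` into `ℝ^d` admits a bilipschitz extension to `ℝ^d`. -/
def ExtProp (d : ℕ) (A : Set (EuclideanSpace ℝ (Fin d))) : Prop :=
  ∀ f : EuclideanSpace ℝ (Fin d) → EuclideanSpace ℝ (Fin d),
    (∃ L : ℝ, 1 ≤ L ∧ IsBilipOn L f A) →
    ∃ F : EuclideanSpace ℝ (Fin d) → EuclideanSpace ℝ (Fin d),
      Function.Bijective F ∧ (∃ L : ℝ, 1 ≤ L ∧ IsBilipOn L F Set.univ) ∧ Set.EqOn F f A

open Set Function
open scoped NNReal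

section Bilip

variable {α β γ : Type*} [PseudoMetricSpace α] [PseudoMetricSpace β] [PseudoMetricSpace γ]
  {K L L' : ℝ} {f : α → β} {s : Set α}

theorem IsBilipOn.weaken (hf : IsBilipOn L f s) (hL : 0 < L) (hLL' : L ≤ L') :
    IsBilipOn L' f s := by
  intro x hx y hy
  obtain ⟨hlo, hup⟩ := hf x hx y hy
  exact ⟨le_trans (by gcongr) hlo, hup.trans (by gcongr)⟩

theorem IsBilipOn.mono {t : Set α} (hf : IsBilipOn L f s) (hts : t ⊆ s) : IsBilipOn L f t :=
  fun x hx y hy => hf x (hts hx) y (hts hy)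

theorem IsBilipOn.comp {g : β → γ} {t : Set β} (hg : IsBilipOn K g t) (hf : IsBilipOn L f s)
    (hst : MapsTo f s t) (hK : 0 ≤ K) : IsBilipOn (K * L) (g ∘ f) s := by
  intro x hx y hy
  obtain ⟨hflo, hfup⟩ := hf x hx y hy
  obtain ⟨hglo, hgup⟩ := hg _ (hst hx) _ (hst hy)
  constructor
  · calc (K * L)⁻¹ * dist x y = K⁻¹ * (L⁻¹ * dist x y) := by rw [mul_inv, mul_assoc]
      _ ≤ K⁻¹ * dist (f x) (f y) := by gcongr
      _ ≤ _ := hglo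
  · calc dist (g (f x)) (g (f y)) ≤ K * (L * dist x y) := hgup.trans (by gcongr)
      _ = K * L * dist x y := by ring

theorem IsBilipOn.injOn {X : Type*} [MetricSpace X] {g : X → β} {t : Set X}
    (hg : IsBilipOn L g t) (hL : 0 < L) : InjOn g t := by
  intro x hx y hy hxy
  have h := (hg x hx y hy).1
  rw [hxy, dist_self] at h
  exact dist_le_zero.1 (nonpos_of_mul_nonpos_right h (inv_pos.2 hL))

theorem isBilipOn_smul {E : Type*} [NormedAddCommGroup E] [NormedSpace ℝ E] {c : ℝ}
    (hc : 1 ≤ c) : IsBilipOn c (fun x : E => c • x) univ := by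
  intro x _ y _
  rw [dist_smul₀, Real.norm_of_nonneg (by linarith)]
  exact ⟨by gcongr; exact inv_le_one_of_one_le₀ hc |>.trans hc, le_rfl⟩

end Bilip

/-- Unlike `Metric.IsSeparated`, the bound is non-strict, as for `(r, R)`-separated nets. -/
def IsSeparatedBy {X : Type*} [PseudoMetricSpace X] (r : ℝ) (A : Set X) : Prop :=
  ∀ a ∈ A, ∀ b ∈ A, a ≠ b → r ≤ dist a b

theorem IsSeparatedBy.image_smul {E : Type*} [NormedAddCommGroup E] [NormedSpace ℝ E]
    {r c : ℝ} {A : Set E} (hA : IsSeparatedBy r A) (hc : 0 ≤ c) :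
    IsSeparatedBy (c * r) ((fun x => c • x) '' A) := by
  rintro _ ⟨a, ha, rfl⟩ _ ⟨b, hb, rfl⟩ hne
  rw [dist_smul₀, Real.norm_of_nonneg hc]
  exact mul_le_mul_of_nonneg_left (hA a ha b hb fun h => hne (h ▸ rfl)) hc

theorem IsSeparatedBy.le_two_mul {E : Type*} [NormedAddCommGroup E] [NormedSpace ℝ E]
    [Nontrivial E] {r R : ℝ} {A : Set E} (hA : IsSeparatedBy r A) (hr : 0 < r)
    (hcover : ∀ p, ∃ a ∈ A, dist p a ≤ R) : r ≤ 2 * R := by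
  obtain ⟨a, ha, -⟩ := hcover 0
  obtain ⟨v, hv⟩ := exists_norm_eq E (half_pos hr).le
  obtain ⟨b, hb, hpb⟩ := hcover (a + v)
  have hpa : dist (a + v) a = r / 2 := by rw [dist_eq_norm, add_sub_cancel_left, hv]
  rcases eq_or_ne b a with rfl | hba
  · linarith
  · linarith [hA b hb a ha hba, dist_triangle_left b a (a + v)]

section PerturbationOfIdentity

variable {E : Type*} [NormedAddCommGroup E] {u : E → E} {k : ℝ≥0}

theorem LipschitzWith.isBilipOn_add_self (hu : LipschitzWith k u) (hk : k < 1) :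
    IsBilipOn (1 - (k : ℝ))⁻¹ (fun x => x + u x) univ := by
  have hk' : (k : ℝ) < 1 := hk
  intro x _ y _
  have hlip := hu.dist_le_mul x y
  have hxy : dist x y ≤ dist (x + u x) (y + u y) + dist (u x) (u y) := by
    simp only [dist_eq_norm]
    calc ‖x - y‖ = ‖(x + u x - (y + u y)) - (u x - u y)‖ := by congr 1; abel
      _ ≤ _ := _root_.norm_sub_le _ _
  have hinv : 1 + (k : ℝ) ≤ (1 - (k : ℝ))⁻¹ := by
    rw [le_inv_comm₀ (by positivity) (by linarith), inv_eq_one_div, le_div_iff₀ (by positivity)]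
    nlinarith
  constructor
  · rw [inv_inv]
    linarith
  · calc dist (x + u x) (y + u y) ≤ dist x y + dist (u x) (u y) := dist_add_add_le _ _ _ _
      _ ≤ (1 + k) * dist x y := by linarith
      _ ≤ _ := by gcongr

theorem LipschitzWith.surjective_add_self [CompleteSpace E] (hu : LipschitzWith k u)
    (hk : k < 1) : Surjective (fun x => x + u x) := by
  intro y
  have hT : ContractingWith k (fun x => y - u x) :=
    ⟨hk, by simpa using (LipschitzWith.const y).sub hu⟩
  set x₀ := ContractingWith.fixedPoint _ hT
  have hx₀ : y - u x₀ = x₀ := hT.fixedPoint_isFixedPt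
  exact ⟨x₀, by rw [← sub_add_cancel y (u x₀), hx₀]⟩

end PerturbationOfIdentity

section Bump

variable {E : Type*} [NormedAddCommGroup E] [NormedSpace ℝ E] {σ : ℝ} {S : Set E} {τ : E → E}
  {a x : E}

open Classical in
/-- When `S` is `σ`-separated the balls `B(a, σ/2)`, `a ∈ S`, are disjoint, so the choice of `a`
made here is irrelevant. -/
noncomputable def bump (σ : ℝ) (S : Set E) (τ : E → E) (x : E) : E :=
  if h : ∃ a ∈ S, dist x a < σ / 2 then
    (1 - dist x h.choose / (σ / 2)) • (τ h.choose - h.choose)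
  else 0

theorem bump_eq_of_dist_lt (hS : IsSeparatedBy σ S) (ha : a ∈ S) (hx : dist x a < σ / 2) :
    bump σ S τ x = (1 - dist x a / (σ / 2)) • (τ a - a) := by
  have h : ∃ a ∈ S, dist x a < σ / 2 := ⟨a, ha, hx⟩
  obtain ⟨hbS, hxb⟩ := h.choose_spec
  have hb : h.choose = a := by
    by_contra hne
    linarith [hS _ hbS a ha hne, dist_triangle_left h.choose a x]
  rw [bump, dif_pos h, hb]

theorem bump_eq_zero (hx : ∀ a ∈ S, σ / 2 ≤ dist x a) : bump σ S τ x = 0 := by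
  rw [bump, dif_neg]
  push Not
  exact hx

variable (hσ : 0 < σ) (hS : IsSeparatedBy σ S) (hτ : ∀ a ∈ S, ‖τ a - a‖ ≤ σ / 6)
include hσ hS hτ

theorem norm_bump_le_of_dist_lt (ha : a ∈ S) (hx : dist x a < σ / 2) :
    ‖bump σ S τ x‖ ≤ (σ / 2 - dist x a) / 3 := by
  have hcoef : 1 - dist x a / (σ / 2) = (σ / 2 - dist x a) / (σ / 2) := by field_simp
  rw [bump_eq_of_dist_lt hS ha hx, norm_smul, hcoef, Real.norm_of_nonneg (by
    apply div_nonneg <;> linarith)]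
  calc (σ / 2 - dist x a) / (σ / 2) * ‖τ a - a‖ ≤ (σ / 2 - dist x a) / (σ / 2) * (σ / 6) := by
        gcongr
        exact hτ a ha
    _ = (σ / 2 - dist x a) / 3 := by field_simp; ring

theorem norm_bump_le_of_le_dist (ha : a ∈ S) (hx : σ / 2 ≤ dist x a) :
    ‖bump σ S τ x‖ ≤ (dist x a - σ / 2) / 3 := by
  by_cases h : ∃ b ∈ S, dist x b < σ / 2
  · obtain ⟨b, hb, hxb⟩ := h
    have hab : b ≠ a := by rintro rfl; linarith
    calc ‖bump σ S τ x‖ ≤ (σ / 2 - dist x b) / 3 := norm_bump_le_of_dist_lt hσ hS hτ hb hxb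
      _ ≤ (dist x a - σ / 2) / 3 := by linarith [hS b hb a ha hab, dist_triangle_left b a x]
  · push Not at h
    rw [bump_eq_zero h, norm_zero]
    linarith

theorem lipschitzWith_bump : LipschitzWith 3⁻¹ (bump σ S τ) := by
  refine LipschitzWith.of_dist_le_mul fun x y => ?_
  push_cast
  suffices key : ∀ x y, (∃ a ∈ S, dist x a < σ / 2) →
      dist (bump σ S τ x) (bump σ S τ y) ≤ 3⁻¹ * dist x y by
    by_cases hx : ∃ a ∈ S, dist x a < σ / 2
    · exact key x y hx
    by_cases hy : ∃ a ∈ S, dist y a < σ / 2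
    · rw [dist_comm, dist_comm x]
      exact key y x hy
    push Not at hx hy
    rw [bump_eq_zero hx, bump_eq_zero hy, dist_self]
    positivity
  rintro x y ⟨a, ha, hxa⟩
  rw [dist_eq_norm]
  by_cases hya : dist y a < σ / 2
  · have hdiff : bump σ S τ x - bump σ S τ y = ((dist y a - dist x a) / (σ / 2)) • (τ a - a) := by
      rw [bump_eq_of_dist_lt hS ha hxa, bump_eq_of_dist_lt hS ha hya, ← sub_smul]
      congr 1
      ring
    have hxy : |dist y a - dist x a| ≤ dist x y := by
      rw [dist_comm x y]
      exact abs_dist_sub_le y x a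
    rw [hdiff, norm_smul, Real.norm_eq_abs, abs_div, abs_of_pos (half_pos hσ)]
    calc |dist y a - dist x a| / (σ / 2) * ‖τ a - a‖ ≤ dist x y / (σ / 2) * (σ / 6) := by
          gcongr
          exact hτ a ha
      _ = 3⁻¹ * dist x y := by field_simp; ring
  · push Not at hya
    calc ‖bump σ S τ x - bump σ S τ y‖ ≤ ‖bump σ S τ x‖ + ‖bump σ S τ y‖ := norm_sub_le _ _
      _ ≤ (σ / 2 - dist x a) / 3 + (dist y a - σ / 2) / 3 :=
          add_le_add (norm_bump_le_of_dist_lt hσ hS hτ ha hxa)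
            (norm_bump_le_of_le_dist hσ hS hτ ha hya)
      _ ≤ 3⁻¹ * dist x y := by linarith [dist_triangle_left y a x]

end Bump

section Snap

variable {E : Type*} [NormedAddCommGroup E] [NormedSpace ℝ E] {σ : ℝ} {S : Set E} {τ : E → E}

noncomputable def snap (σ : ℝ) (S : Set E) (τ : E → E) (x : E) : E := x + bump σ S τ x

theorem snap_eq_of_mem (hσ : 0 < σ) (hS : IsSeparatedBy σ S) {a : E} (ha : a ∈ S) :
    snap σ S τ a = τ a := by
  rw [snap, bump_eq_of_dist_lt hS ha (by rw [dist_self]; linarith), dist_self]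
  simp

variable (hσ : 0 < σ) (hS : IsSeparatedBy σ S) (hτ : ∀ a ∈ S, ‖τ a - a‖ ≤ σ / 6)
include hσ hS hτ

theorem isBilipOn_snap : IsBilipOn (3 / 2) (snap σ S τ) univ := by
  convert (lipschitzWith_bump hσ hS hτ).isBilipOn_add_self (by norm_num) using 1
  · norm_num
  · rfl

theorem bijective_snap [CompleteSpace E] : Bijective (snap σ S τ) :=
  ⟨injOn_univ.1 ((isBilipOn_snap hσ hS hτ).injOn (by norm_num)),
    (lipschitzWith_bump hσ hS hτ).surjective_add_self (by norm_num)⟩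

end Snap

section Lattice

variable {d : ℕ}

noncomputable def latRound (x : EuclideanSpace ℝ (Fin d)) : EuclideanSpace ℝ (Fin d) :=
  WithLp.toLp 2 fun i => (round (x i) : ℝ)

theorem latRound_mem_intLattice (x : EuclideanSpace ℝ (Fin d)) : latRound x ∈ intLattice d :=
  fun i => ⟨round (x i), rfl⟩

theorem dist_latRound_le (x : EuclideanSpace ℝ (Fin d)) : dist x (latRound x) ≤ √d / 2 := by
  have hcoord : ∀ i, dist (x i) (latRound x i) ^ 2 ≤ (1 / 2) ^ 2 := fun i => by
    rw [Real.dist_eq]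
    exact pow_le_pow_left₀ (abs_nonneg _) (abs_sub_round (x i)) 2
  rw [EuclideanSpace.dist_eq]
  calc √(∑ i, dist (x i) (latRound x i) ^ 2) ≤ √(∑ _i : Fin d, (1 / 2 : ℝ) ^ 2) :=
        Real.sqrt_le_sqrt (Finset.sum_le_sum fun i _ => hcoord i)
    _ = √d / 2 := by
        simp only [Finset.sum_const, Finset.card_univ, Fintype.card_fin, nsmul_eq_mul]
        rw [Real.sqrt_mul (Nat.cast_nonneg d), Real.sqrt_sq (by norm_num)]
        ring

theorem isSeparatedBy_one_intLattice : IsSeparatedBy 1 (intLattice d) := by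
  intro x hx y hy hxy
  obtain ⟨i, hi⟩ : ∃ i, x i ≠ y i := by
    by_contra! h
    exact hxy (PiLp.ext h)
  obtain ⟨m, hm⟩ := hx i
  obtain ⟨n, hn⟩ := hy i
  rw [hm, hn, Ne, Int.cast_inj] at hi
  calc (1 : ℝ) ≤ ((|m - n| : ℤ) : ℝ) := by exact_mod_cast Int.one_le_abs (sub_ne_zero.2 hi)
    _ = dist (x i) (y i) := by rw [Real.dist_eq, hm, hn]; push_cast; rfl
    _ ≤ dist x y := PiLp.dist_apply_le x y i

theorem exists_bijective_isBilipOn_mapsTo_intLattice {A : Set (EuclideanSpace ℝ (Fin d))}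
    {r R m : ℝ} (hr : 0 < r) (hm : 1 ≤ m) (hmr : 3 * √d ≤ m * r) (hA : IsSeparatedBy r A)
    (hcover : ∀ p, ∃ a ∈ A, dist p a ≤ R) :
    ∃ Ψ : EuclideanSpace ℝ (Fin d) → EuclideanSpace ℝ (Fin d), Bijective Ψ ∧
      IsBilipOn (3 / 2 * m) Ψ univ ∧ MapsTo Ψ A (intLattice d) ∧
      ∀ z, ∃ a ∈ A, dist z (Ψ a) ≤ m * R + √d / 2 := by
  have hm₀ : 0 < m := by linarith
  set S := (fun x => m • x) '' A
  have hσ : 0 < m * r := by positivity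
  have hS : IsSeparatedBy (m * r) S := hA.image_smul hm₀.le
  have hround : ∀ a ∈ S, ‖latRound a - a‖ ≤ m * r / 6 := fun a _ => by
    rw [← dist_eq_norm, dist_comm]
    linarith [dist_latRound_le a]
  have hΨA : ∀ a ∈ A, snap (m * r) S latRound (m • a) = latRound (m • a) := fun a ha =>
    snap_eq_of_mem hσ hS (mem_image_of_mem _ ha)
  refine ⟨snap (m * r) S latRound ∘ (fun x => m • x),
    (bijective_snap hσ hS hround).comp (Homeomorph.smulOfNeZero m hm₀.ne').bijective,
    (isBilipOn_snap hσ hS hround).comp (isBilipOn_smul hm) (mapsTo_univ _ _) (by norm_num),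
    fun a ha => ?_, fun z => ?_⟩
  · simp only [comp_apply, hΨA a ha]
    exact latRound_mem_intLattice _
  · obtain ⟨a, ha, hza⟩ := hcover (m⁻¹ • z)
    have hz : dist z (m • a) ≤ m * R := by
      rw [← smul_inv_smul₀ hm₀.ne' z, dist_smul₀, Real.norm_of_nonneg hm₀.le]
      gcongr
    refine ⟨a, ha, ?_⟩
    rw [comp_apply, hΨA a ha]
    linarith [dist_triangle z (m • a) (latRound (m • a)), dist_latRound_le (m • a)]

end Lattice

theorem exists_retraction_of_dense {X E : Type*} [PseudoMetricSpace E] {A : Set X} {Ψ : X → E}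
    {D : ℝ} (hΨ : InjOn Ψ A) (hdense : ∀ z, ∃ a ∈ A, dist z (Ψ a) ≤ D) :
    ∃ ρ : E → X, (∀ z, ρ z ∈ A) ∧ (∀ z, dist z (Ψ (ρ z)) ≤ D) ∧ ∀ a ∈ A, ρ (Ψ a) = a := by
  have hchoice : ∀ z, ∃ a ∈ A, dist z (Ψ a) ≤ D ∧ ∀ b ∈ A, Ψ b = z → b = a := by
    intro z
    by_cases h : ∃ b ∈ A, Ψ b = z
    · obtain ⟨b, hb, rfl⟩ := h
      obtain ⟨_, -, hD⟩ := hdense (Ψ b)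
      exact ⟨b, hb, by simpa using dist_nonneg.trans hD, fun c hc hcb => hΨ hc hb hcb⟩
    · push Not at h
      obtain ⟨a, ha, hza⟩ := hdense z
      exact ⟨a, ha, hza, fun b hb hbz => absurd hbz (h b hb)⟩
  choose ρ hρA hρD hρΨ using hchoice
  exact ⟨ρ, hρA, hρD, fun a ha => (hρΨ _ a ha rfl).symm⟩

theorem dist_le_mul_dist_of_near {X Y W : Type*} [PseudoMetricSpace X] [PseudoMetricSpace Y]
    [PseudoMetricSpace W] {A : Set X} {f : X → W} {Ψ : X → Y} {L T D r η : ℝ} {a b : X}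
    {z w : Y} {u v : W} (hL : 1 ≤ L) (hT : 1 ≤ T) (hr : 0 < r) (hf : IsBilipOn L f A)
    (hΨ : IsBilipOn T Ψ A) (ha : a ∈ A) (hb : b ∈ A) (hab : r ≤ dist a b) (hzw : 1 ≤ dist z w)
    (hza : dist z (Ψ a) ≤ D) (hwb : dist w (Ψ b) ≤ D) (hua : dist u (f a) ≤ η)
    (hvb : dist v (f b) ≤ η) (hη : 2 * L * η ≤ r / 2) :
    dist z w ≤ 2 * L * (T + 2 * (D / r)) * dist u v ∧
      dist u v ≤ 2 * L * (T * (1 + 2 * D)) * dist z w := by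
  have hD : 0 ≤ D := dist_nonneg.trans hza
  have hη₀ : 0 ≤ η := dist_nonneg.trans hua
  obtain ⟨hflo, hfup⟩ := hf a ha b hb
  obtain ⟨hΨlo, hΨup⟩ := hΨ a ha b hb
  rw [inv_mul_le_iff₀ (by linarith)] at hflo hΨlo
  have huv := abs_sub_le_iff.1 ((dist_dist_dist_le u v (f a) (f b)).trans (add_le_add hua hvb))
  have hzw' := abs_sub_le_iff.1 ((dist_dist_dist_le z w (Ψ a) (Ψ b)).trans (add_le_add hza hwb))
  have hzab : dist z w ≤ (T + 2 * (D / r)) * dist a b := by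
    have : D ≤ D / r * dist a b := by
      rw [div_mul_eq_mul_div, le_div_iff₀ hr]
      nlinarith
    nlinarith
  have habz : dist a b ≤ T * (1 + 2 * D) * dist z w :=
    calc dist a b ≤ T * (dist z w + 2 * D * 1) := by nlinarith
      _ ≤ T * (dist z w + 2 * D * dist z w) := by gcongr
      _ = T * (1 + 2 * D) * dist z w := by ring
  have habu : dist a b ≤ 2 * L * dist u v := by nlinarith
  have huab : dist u v ≤ 2 * L * dist a b := by
    nlinarith [mul_nonneg (by linarith : (0 : ℝ) ≤ L - 1) hη₀]
  constructor
  · calc dist z w ≤ (T + 2 * (D / r)) * (2 * L * dist u v) := hzab.trans (by gcongr)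
      _ = 2 * L * (T + 2 * (D / r)) * dist u v := by ring
  · calc dist u v ≤ 2 * L * (T * (1 + 2 * D) * dist z w) := huab.trans (by gcongr)
      _ = 2 * L * (T * (1 + 2 * D)) * dist z w := by ring

section LatticeMap

variable {X E : Type*} [MetricSpace X] [NormedAddCommGroup E] [NormedSpace ℝ E]
  {A : Set X} {Z : Set E} {f Ψ : X → E} {L T D r : ℝ}

/-- The factor `ε = (4 * L * (1 + D / r))⁻¹` keeps the offsets `ε • (z - Ψ (ρ z))`, of norm at
most `ε * D ≤ r / (4 * L)`, small against the distance `≥ r / L` between the `f`-images of distinct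
points of `A`. -/
theorem isBilipOn_add_smul_sub {ρ : E → X} (hL : 1 ≤ L) (hT : 1 ≤ T) (hr : 0 < r)
    (hA : IsSeparatedBy r A) (hZ : IsSeparatedBy 1 Z) (hf : IsBilipOn L f A)
    (hΨ : IsBilipOn T Ψ A) (hρA : ∀ z, ρ z ∈ A) (hρD : ∀ z, dist z (Ψ (ρ z)) ≤ D) :
    IsBilipOn (4 * L * (1 + 2 * D) * (T + 2 * D / r))
      (fun z => f (ρ z) + (4 * L * (1 + D / r))⁻¹ • (z - Ψ (ρ z))) Z := by
  have hD : 0 ≤ D := dist_nonneg.trans (hρD 0)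
  rw [mul_div_assoc]
  set ε := (4 * L * (1 + D / r))⁻¹ with hε
  set M := 4 * L * (1 + 2 * D) * (T + 2 * (D / r))
  set g := fun z => f (ρ z) + ε • (z - Ψ (ρ z))
  have hDr : 0 ≤ D / r := by positivity
  have hε₀ : 0 < ε := by positivity
  have hε₁ : ε ≤ 1 := inv_le_one_of_one_le₀ (by nlinarith)
  have hM : ε⁻¹ ≤ M := by
    rw [hε, inv_inv]
    have : 1 + D / r ≤ (1 + 2 * D) * (T + 2 * (D / r)) := by
      nlinarith [mul_nonneg hD hDr, mul_nonneg hD (by linarith : (0 : ℝ) ≤ T)]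
    nlinarith
  have hεD : 2 * L * (ε * D) ≤ r / 2 := by
    rw [hε]
    field_simp
    nlinarith
  have hnear : ∀ z, dist (g z) (f (ρ z)) ≤ ε * D := fun z => by
    rw [dist_self_add_left, norm_smul, Real.norm_of_nonneg hε₀.le, ← dist_eq_norm]
    exact mul_le_mul_of_nonneg_left (hρD z) hε₀.le
  intro z hz w hw
  rcases eq_or_ne (ρ z) (ρ w) with hzw | hzw
  · have hdist : dist (g z) (g w) = ε * dist z w := by
      simp only [g, hzw, dist_add_left, dist_smul₀, Real.norm_of_nonneg hε₀.le, dist_sub_right]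
    rw [hdist]
    have hM₁ : 1 ≤ M := le_trans (one_le_inv_iff₀.2 ⟨hε₀, hε₁⟩) hM
    exact ⟨by gcongr; exact inv_le_of_inv_le₀ hε₀ hM, by gcongr; linarith⟩
  obtain ⟨hlo, hup⟩ := dist_le_mul_dist_of_near hL hT hr hf hΨ (hρA z) (hρA w)
    (hA _ (hρA z) _ (hρA w) hzw) (hZ z hz w hw fun h => hzw (h ▸ rfl)) (hρD z) (hρD w)
    (hnear z) (hnear w) hεD
  have hLT : 0 ≤ 2 * L * (T + 2 * (D / r)) := by positivity
  constructor
  · rw [inv_mul_le_iff₀ (by positivity)]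
    exact hlo.trans (by gcongr; nlinarith [mul_nonneg hLT hD])
  · exact hup.trans (by gcongr; nlinarith [mul_nonneg hLT hD, mul_nonneg hLT hDr])

theorem exists_isBilipOn_comp_eq (hL : 1 ≤ L) (hT : 1 ≤ T) (hr : 0 < r)
    (hA : IsSeparatedBy r A) (hZ : IsSeparatedBy 1 Z) (hf : IsBilipOn L f A)
    (hΨ : IsBilipOn T Ψ A) (hdense : ∀ z, ∃ a ∈ A, dist z (Ψ a) ≤ D) :
    ∃ g : E → E, IsBilipOn (4 * L * (1 + 2 * D) * (T + 2 * D / r)) g Z ∧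
      ∀ a ∈ A, g (Ψ a) = f a := by
  obtain ⟨ρ, hρA, hρD, hρΨ⟩ := exists_retraction_of_dense (hΨ.injOn (by linarith)) hdense
  refine ⟨_, isBilipOn_add_smul_sub hL hT hr hA hZ hf hΨ hρA hρD, fun a ha => ?_⟩
  simp [hρΨ a ha]

end LatticeMap

theorem sqrt_natCast_le_self (d : ℕ) : √d ≤ d :=
  (Real.sqrt_le_left (Nat.cast_nonneg d)).2 (by exact_mod_cast Nat.le_self_pow two_ne_zero d)

theorem lattice_bilip_constant_le {d : ℕ} {L R r m : ℝ} (hd : 1 ≤ d) (hL : 0 ≤ L) (hm : 1 ≤ m)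
    (hr : 0 < r) (hmr : 3 * d ≤ m * r) (hrR : r ≤ 2 * R) :
    4 * L * (1 + 2 * (m * R + √d / 2)) * (3 / 2 * m + 2 * (m * R + √d / 2) / r) ≤
      24 * √d * R ^ 2 * (16 * m) ^ 3 * L := by
  have hs : 1 ≤ √d := Real.one_le_sqrt.2 (by exact_mod_cast hd)
  have hsd := sqrt_natCast_le_self d
  have hd' : (1 : ℝ) ≤ d := by exact_mod_cast hd
  have hx : 3 / 2 ≤ m * R := by nlinarith
  have hR : 0 ≤ R := by linarith
  have hfirst : 1 + 2 * (m * R + √d / 2) ≤ 4 * √d * (m * R) := by nlinarith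
  have hsecond : 3 / 2 * m + 2 * (m * R + √d / 2) / r ≤ 2 * m * (m * R) := by
    have : 2 * (m * R + √d / 2) / r ≤ 2 / 3 * m * (m * R) + m / 3 := by
      rw [div_le_iff₀ hr]
      nlinarith [mul_le_mul_of_nonneg_left (by linarith : 3 ≤ m * r) (by positivity : 0 ≤ m * R)]
    nlinarith
  calc 4 * L * (1 + 2 * (m * R + √d / 2)) * (3 / 2 * m + 2 * (m * R + √d / 2) / r)
      ≤ 4 * L * (4 * √d * (m * R)) * (2 * m * (m * R)) := by gcongr
    _ = 32 * √d * R ^ 2 * m ^ 3 * L := by ring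
    _ ≤ 24 * √d * R ^ 2 * (16 * m) ^ 3 * L := by
        have : 0 ≤ √d * R ^ 2 * m ^ 3 * L := by positivity
        nlinarith

theorem exists_lattice_reduction {d : ℕ} (hd : 1 ≤ d) {A : Set (EuclideanSpace ℝ (Fin d))}
    {r R L : ℝ} {f : EuclideanSpace ℝ (Fin d) → EuclideanSpace ℝ (Fin d)} (hr : 0 < r)
    (hA : IsSeparatedBy r A) (hcover : ∀ p, ∃ a ∈ A, dist p a ≤ R) (hL : 1 ≤ L)
    (hf : IsBilipOn L f A) :
    ∃ (Ψ g : EuclideanSpace ℝ (Fin d) → EuclideanSpace ℝ (Fin d)) (M : ℝ), Bijective Ψ ∧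
      IsBilipOn (16 * max (3 * d / r) 1) Ψ univ ∧ MapsTo Ψ A (intLattice d) ∧ 1 ≤ M ∧
      M ≤ 24 * √d * R ^ 2 * (16 * max (3 * d / r) 1) ^ 3 * L ∧
      IsBilipOn M g (intLattice d) ∧ ∀ a ∈ A, g (Ψ a) = f a := by
  set m := max (3 * d / r) 1
  have hm : 1 ≤ m := le_max_right _ _
  have hmr : 3 * d ≤ m * r := (div_le_iff₀ hr).1 (le_max_left _ _)
  have : Nonempty (Fin d) := ⟨⟨0, hd⟩⟩
  have hrR : r ≤ 2 * R := hA.le_two_mul hr hcover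
  obtain ⟨Ψ, hΨbij, hΨ, hΨA, hdense⟩ := exists_bijective_isBilipOn_mapsTo_intLattice hr hm
    (by linarith [sqrt_natCast_le_self d]) hA hcover
  obtain ⟨g, hg, hgf⟩ := exists_isBilipOn_comp_eq hL (by nlinarith) hr hA
    isSeparatedBy_one_intLattice hf (hΨ.mono (subset_univ A)) hdense
  refine ⟨Ψ, g, _, hΨbij, hΨ.weaken (by positivity) (by linarith), hΨA, ?_,
    lattice_bilip_constant_le hd (by linarith) hm hr hmr hrR, hg, hgf⟩
  have hR : 0 ≤ R := by linarith
  have : 0 ≤ 2 * (m * R + √d / 2) / r := by positivity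
  have : 1 ≤ 1 + 2 * (m * R + √d / 2) := by nlinarith [Real.sqrt_nonneg d]
  have : 1 ≤ 3 / 2 * m + 2 * (m * R + √d / 2) / r := by linarith
  calc (1 : ℝ) ≤ 4 * 1 * 1 * 1 := by norm_num
    _ ≤ _ := by gcongr

theorem stmt_9 (d : ℕ) (hd : 1 ≤ d) :
    (ExtProp d (intLattice d) ↔
      ∀ (A : Set (EuclideanSpace ℝ (Fin d))) (r R : ℝ), 0 < r → 0 < R →
        (∀ a ∈ A, ∀ b ∈ A, a ≠ b → r ≤ dist a b) →
        (∀ p : EuclideanSpace ℝ (Fin d), ∃ a ∈ A, dist p a ≤ R) →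
        ExtProp d A) ∧
    (∀ C : ℝ → ℝ, MonotoneOn C (Set.Ici 1) → (∀ t : ℝ, 1 ≤ t → 1 ≤ C t) →
      (∀ (f : EuclideanSpace ℝ (Fin d) → EuclideanSpace ℝ (Fin d)) (L : ℝ), 1 ≤ L →
        IsBilipOn L f (intLattice d) →
        ∃ F, Function.Bijective F ∧ IsBilipOn (C L) F Set.univ ∧
          Set.EqOn F f (intLattice d)) →
      ∀ (A : Set (EuclideanSpace ℝ (Fin d))) (r R : ℝ), 0 < r → 0 < R →
        (∀ a ∈ A, ∀ b ∈ A, a ≠ b → r ≤ dist a b) →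
        (∀ p : EuclideanSpace ℝ (Fin d), ∃ a ∈ A, dist p a ≤ R) →
        ∀ (f : EuclideanSpace ℝ (Fin d) → EuclideanSpace ℝ (Fin d)) (L : ℝ), 1 ≤ L →
          IsBilipOn L f A →
          ∃ F, Function.Bijective F ∧
            IsBilipOn ((16 * max (3 * d / r) 1) *
              C (24 * Real.sqrt d * R ^ 2 * (16 * max (3 * d / r) 1) ^ 3 * L)) F Set.univ ∧
            Set.EqOn F f A) := by
  have hK : ∀ r : ℝ, 1 ≤ 16 * max (3 * d / r) 1 := fun r => by
    linarith [le_max_right (3 * (d : ℝ) / r) 1]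
  refine ⟨⟨fun hlat A r R hr _ hA hcover f ⟨L, hL, hf⟩ => ?_, fun hnet => ?_⟩,
    fun C hCmono hC1 hlat A r R hr _ hA hcover f L hL hf => ?_⟩
  · obtain ⟨Ψ, g, M, hΨ, hΨK, hΨA, hM, -, hg, hgf⟩ :=
      exists_lattice_reduction hd hr hA hcover hL hf
    obtain ⟨G, hG, ⟨M', hM', hGM'⟩, hGg⟩ := hlat g ⟨M, hM, hg⟩
    exact ⟨G ∘ Ψ, hG.comp hΨ, ⟨_, one_le_mul_of_one_le_of_one_le hM' (hK r),
      hGM'.comp hΨK (mapsTo_univ _ _) (by linarith)⟩,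
      fun a ha => (hGg (hΨA ha)).trans (hgf a ha)⟩
  · exact hnet _ 1 √d one_pos (Real.sqrt_pos.2 (Nat.cast_pos.2 hd)) isSeparatedBy_one_intLattice
      fun p => ⟨latRound p, latRound_mem_intLattice p,
        (dist_latRound_le p).trans (half_le_self (Real.sqrt_nonneg d))⟩
  · obtain ⟨Ψ, g, M, hΨ, hΨK, hΨA, hM, hMT, hg, hgf⟩ :=
      exists_lattice_reduction hd hr hA hcover hL hf
    obtain ⟨G, hG, hGM, hGg⟩ := hlat g M hM hg
    have hCM := hC1 M hM
    have hCMT := hCmono hM (hM.trans hMT) hMT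
    refine ⟨G ∘ Ψ, hG.comp hΨ, ?_, fun a ha => (hGg (hΨA ha)).trans (hgf a ha)⟩
    rw [mul_comm]
    exact (hGM.weaken (by linarith) hCMT).comp hΨK (mapsTo_univ _ _) (by linarith)
end

section
/- Let l, S ∈ ℕ. Every permutation σ of the grid [S]^l = {1,…,S}^l can be written as a composition σ = σ_{(2l−1)S} ∘ ⋯ ∘ σ₁ where each σ_i is an involution of [S]^l (σ_i ∘ σ_i = id) satisfying ‖x − σ_i(x)‖ ≤ 1 for every x ∈ [S]^l, i.e., each σ_i is a product of disjoint transpositions of grid-adjacent points. -/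
/-!
Odd-even transposition sort sorts every sequence of length `S` in `S` rounds. By the 0-1
principle it suffices to check this on 0-1 sequences, where the one with `r` ones above it is,
from round `r + 1` on, either at its final position or in phase with the rounds and hence moving
up in every round. The swaps of one round form an involution moving points only along path edges,
so `rt(P_S) ≤ S`.

For `π` a permutation of `G × H`, König's edge-colouring theorem, applied to the `|G|`-regular
bipartite multigraph joining the row `a.2` of each point to its target row `(π a).2`, assigns
columns `c a` such that `π` factors into a permutation within rows, one within columns and one
within rows again. Hence `rt(G □ H) ≤ 2 rt(G) + rt(H)`, and induction on the dimension gives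
`(2l - 1) S` steps for the grid.
-/

open Equiv Finset Function

section Routing

variable {α β : Type*}

def IsRoutingStep (r : α → α → Prop) (τ : Perm α) : Prop :=
  Involutive τ ∧ ∀ x, τ x = x ∨ r x (τ x)

def Routes (r : α → α → Prop) (n : ℕ) (σ : Perm α) : Prop :=
  ∃ τ : Fin n → Perm α, (∀ i, IsRoutingStep r (τ i)) ∧ (List.ofFn τ).prod = σ

variable {r : α → α → Prop} {m n : ℕ}

lemma IsRoutingStep.mono {r' : α → α → Prop} {τ : Perm α} (h : IsRoutingStep r τ)
    (hr : ∀ x y, r x y → r' x y) : IsRoutingStep r' τ :=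
  ⟨h.1, fun x => (h.2 x).imp_right (hr _ _)⟩

lemma Routes.mono {r' : α → α → Prop} {σ : Perm α} (h : Routes r n σ)
    (hr : ∀ x y, r x y → r' x y) : Routes r' n σ :=
  let ⟨τ, hτ, hprod⟩ := h
  ⟨τ, fun i => (hτ i).mono hr, hprod⟩

lemma Routes.mul {σ σ' : Perm α} (h : Routes r m σ) (h' : Routes r n σ') :
    Routes r (m + n) (σ * σ') := by
  obtain ⟨τ, hτ, rfl⟩ := h
  obtain ⟨τ', hτ', rfl⟩ := h'
  refine ⟨Fin.append τ τ', fun i => ?_, by rw [List.ofFn_fin_append, List.prod_append]⟩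
  induction i using Fin.addCases <;> simp [hτ, hτ']

lemma Routes.permCongr {r' : β → β → Prop} (e : α ≃ β) (he : ∀ x y, r x y → r' (e x) (e y))
    {σ : Perm α} (h : Routes r n σ) : Routes r' n (e.permCongr σ) := by
  obtain ⟨τ, hτ, rfl⟩ := h
  refine ⟨fun i => e.permCongr (τ i), fun i => ⟨fun y => by simp [(hτ i).1 _], fun y => ?_⟩, ?_⟩
  · simpa [Equiv.permCongr_apply, e.symm_apply_eq] using
      ((hτ i).2 (e.symm y)).imp (congrArg e) (he _ _)
  · rw [← Equiv.permCongrHom_coe, map_list_prod, List.map_ofFn]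
    rfl

lemma Routes.of_monoidHom {ι : Type*} {s : β → β → Prop} (Φ : (ι → Perm β) →* Perm α)
    (hΦ : ∀ ρ, (∀ i, IsRoutingStep s (ρ i)) → IsRoutingStep r (Φ ρ)) {ρ : ι → Perm β}
    (h : ∀ i, Routes s n (ρ i)) : Routes r n (Φ ρ) := by
  choose τ hτ hprod using h
  refine ⟨fun k => Φ fun i => τ i k, fun k => hΦ _ fun i => hτ i k, ?_⟩
  have : (List.ofFn fun k i => τ i k).prod = ρ := by
    funext i
    rw [Pi.list_prod_apply, List.map_ofFn]
    exact hprod i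
  rw [← this, map_list_prod, List.map_ofFn]
  rfl

end Routing

section CompareExchange

variable {ι β : Type*} [LinearOrder ι]

def compareExchange [LinearOrder β] (p : ι → ι) (f : ι → β) (q : ι) : β :=
  if q ≤ p q then min (f q) (f (p q)) else max (f q) (f (p q))

lemma Monotone.comp_compareExchange [LinearOrder β] {γ : Type*} [LinearOrder γ] {h : β → γ}
    (hh : Monotone h) (p : ι → ι) (f : ι → β) :
    h ∘ compareExchange p f = compareExchange p (h ∘ f) := by
  funext q
  simp only [comp_apply, compareExchange]
  split_ifs <;> simp [hh.map_min, hh.map_max]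

variable {p : ι → ι}

def exchangeSwap (hp : Involutive p) (d : Perm ι) : Perm ι :=
  Involutive.toPerm (fun q => if (q ≤ p q ↔ d q ≤ d (p q)) then q else p q) fun q => by
    have hd : p q ≠ q → d (p q) ≠ d q := d.injective.ne
    have hpq := hp q
    dsimp only
    split_ifs <;> grind

lemma exchangeSwap_apply (hp : Involutive p) (d : Perm ι) (q : ι) :
    exchangeSwap hp d q = if (q ≤ p q ↔ d q ≤ d (p q)) then q else p q := rfl

lemma exchangeSwap_eq_or (hp : Involutive p) (d : Perm ι) (q : ι) :
    exchangeSwap hp d q = q ∨ exchangeSwap hp d q = p q := by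
  rw [exchangeSwap_apply]
  split_ifs <;> simp

lemma coe_mul_exchangeSwap (hp : Involutive p) (d : Perm ι) :
    ⇑(d * exchangeSwap hp d) = compareExchange p d := by
  funext q
  have hd : p q ≠ q → d (p q) ≠ d q := d.injective.ne
  simp only [Perm.coe_mul, comp_apply, exchangeSwap_apply, compareExchange]
  split_ifs <;> grind

def exchangeTarget (p : ι → ι) (S : Finset ι) (q : ι) : ι :=
  if q < p q ∧ p q ∉ S then p q else q

lemma filter_compareExchange [Fintype ι] (hp : Involutive p) (b : ι → Bool) :
    ({q | compareExchange p b q} : Finset ι) =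
      ({q | b q} : Finset ι).image (exchangeTarget p {q | b q}) := by
  ext x
  simp only [mem_filter, mem_univ, true_and, mem_image]
  have hpx := hp x
  constructor
  · intro hx
    by_cases hmove : p x < x ∧ b (p x) ∧ ¬ b x
    · exact ⟨p x, hmove.2.1, by simp [exchangeTarget, hpx, hmove.1, hmove.2.2]⟩
    · refine ⟨x, ?_, ?_⟩ <;>
        simp only [compareExchange, exchangeTarget, Bool.min_eq_and, Bool.max_eq_or] at hx ⊢ <;>
        split_ifs at hx ⊢ <;> grind
  · rintro ⟨y, hy, rfl⟩
    have hpy := hp y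
    simp only [compareExchange, exchangeTarget, Bool.min_eq_and, Bool.max_eq_or]
    split_ifs <;> grind

lemma isRoutingStep_exchangeSwap {r : ι → ι → Prop}
    (hp : Involutive p) (hpr : ∀ q, p q = q ∨ r q (p q)) (d : Perm ι) :
    IsRoutingStep r (exchangeSwap hp d) :=
  ⟨Involutive.toPerm_involutive _, fun q => (exchangeSwap_eq_or hp d q).elim Or.inl
    fun h => h ▸ hpr q⟩

end CompareExchange

section NumAbove

variable {ι κ : Type*} [LinearOrder ι] [LinearOrder κ]

def numAbove (S : Finset ι) (q : ι) : ℕ := #{p ∈ S | q < p}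

lemma numAbove_image [DecidableEq κ] {f : ι → κ} {S : Finset ι} (hf : StrictMonoOn f S) {q : ι}
    (hq : q ∈ S) : numAbove (S.image f) (f q) = numAbove S q := by
  unfold numAbove
  rw [filter_image, card_image_of_injOn (hf.injOn.mono (filter_subset _ _))]
  congr 1
  exact filter_congr fun x hx => hf.lt_iff_lt hq hx

lemma numAbove_eq_succ {S : Finset ι} {q q' : ι} (hq' : q' ∈ S) (hlt : q < q')
    (hcovby : ∀ p, q < p → q' ≤ p) : numAbove S q = numAbove S q' + 1 := by
  unfold numAbove
  rw [← card_insert_of_notMem (s := {p ∈ S | q' < p}) (a := q') (by simp)]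
  congr 1
  ext p
  simp only [mem_filter, mem_insert]
  constructor
  · rintro ⟨hp, hqp⟩
    rcases (hcovby p hqp).eq_or_lt with rfl | h
    · exact Or.inl rfl
    · exact Or.inr ⟨hp, h⟩
  · rintro (rfl | ⟨hp, h⟩)
    · exact ⟨hq', hlt⟩
    · exact ⟨hp, hlt.trans h⟩

lemma numAbove_of_isMax {S : Finset ι} {q : ι} (hq : IsMax q) : numAbove S q = 0 := by
  simp [numAbove, hq.not_lt]

end NumAbove

section OddEvenTranspositionSort

variable {n t : ℕ}

/-- Round `t` compares the positions `(q, q + 1)` with `q ≡ t [MOD 2]`. -/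
def oddEvenPartner (n t : ℕ) (q : Fin n) : Fin n :=
  if h : q.val % 2 = t % 2 ∧ q.val + 1 < n then ⟨q.val + 1, h.2⟩
  else if q.val % 2 ≠ t % 2 ∧ 0 < q.val then ⟨q.val - 1, by omega⟩ else q

lemma val_oddEvenPartner (q : Fin n) :
    (oddEvenPartner n t q : ℕ) =
      if q.val % 2 = t % 2 ∧ q.val + 1 < n then q.val + 1
      else if q.val % 2 ≠ t % 2 ∧ 0 < q.val then q.val - 1 else q.val := by
  unfold oddEvenPartner
  split_ifs <;> rfl

lemma oddEvenPartner_involutive : Involutive (oddEvenPartner n t) := fun q =>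
  Fin.ext (by simp only [val_oddEvenPartner]; split_ifs <;> omega)

lemma oddEvenPartner_eq_or_adj (q : Fin n) :
    oddEvenPartner n t q = q ∨ (SimpleGraph.pathGraph n).Adj q (oddEvenPartner n t q) := by
  rw [SimpleGraph.pathGraph_adj, Fin.ext_iff, val_oddEvenPartner]
  split_ifs <;> omega

lemma lt_oddEvenPartner_iff {q : Fin n} :
    q < oddEvenPartner n t q ↔ q.val % 2 = t % 2 ∧ q.val + 1 < n := by
  rw [Fin.lt_def, val_oddEvenPartner]
  split_ifs <;> omega

lemma val_oddEvenPartner_of_lt {q : Fin n} (h : q < oddEvenPartner n t q) :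
    (oddEvenPartner n t q : ℕ) = q.val + 1 := by
  rw [val_oddEvenPartner, if_pos (lt_oddEvenPartner_iff.1 h)]

def oddEvenSort {β : Type*} [LinearOrder β] (n : ℕ) (f : Fin n → β) : ℕ → Fin n → β
  | 0 => f
  | t + 1 => compareExchange (oddEvenPartner n t) (oddEvenSort n f t)

lemma Monotone.comp_oddEvenSort {β γ : Type*} [LinearOrder β] [LinearOrder γ] {h : β → γ}
    (hh : Monotone h) (f : Fin n → β) (t : ℕ) :
    h ∘ oddEvenSort n f t = oddEvenSort n (h ∘ f) t := by
  induction t with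
  | zero => rfl
  | succ t ih => simp only [oddEvenSort, hh.comp_compareExchange, ih]

lemma exchangeTarget_oddEvenPartner_strictMonoOn (S : Finset (Fin n)) :
    StrictMonoOn (exchangeTarget (oddEvenPartner n t) S) S := by
  intro y hy z hz hyz
  have hz_le : z ≤ exchangeTarget (oddEvenPartner n t) S z := by
    unfold exchangeTarget; split_ifs with h
    exacts [h.1.le, le_rfl]
  refine lt_of_lt_of_le ?_ hz_le
  unfold exchangeTarget
  split_ifs with h
  · have hne : z ≠ oddEvenPartner n t y := fun he => h.2 (he ▸ hz)
    have := val_oddEvenPartner_of_lt h.1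
    rw [Fin.lt_def] at hyz ⊢
    rw [Ne, Fin.ext_iff] at hne
    omega
  · exact hyz

/-- The one at `q` has `r = numAbove S q` ones above it, so its final position is `n - 1 - r`.
After round `r` it is in phase with the rounds unless already final, and after round `t` it is at
position at least `t - r - 1`. -/
def OddEvenInvariant (t : ℕ) (S : Finset (Fin n)) : Prop :=
  ∀ q ∈ S, (numAbove S q < t → q.val % 2 = t % 2 ∨ q.val + numAbove S q + 1 = n) ∧
    min n t ≤ q.val + numAbove S q + 1

lemma oddEvenInvariant_zero (S : Finset (Fin n)) : OddEvenInvariant 0 S := by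
  intro q _
  simp

lemma OddEvenInvariant.val_add_numAbove_eq_of_stuck {S : Finset (Fin n)}
    (hS : OddEvenInvariant t S) {q : Fin n} (hr : numAbove S q ≤ t) (hpar : q.val % 2 = t % 2)
    (hstay : exchangeTarget (oddEvenPartner n t) S q = q) : q.val + numAbove S q + 1 = n := by
  by_cases hlast : q.val + 1 < n
  · have hlt : q < oddEvenPartner n t q := lt_oddEvenPartner_iff.2 ⟨hpar, hlast⟩
    have hval := val_oddEvenPartner_of_lt hlt
    have hmem : oddEvenPartner n t q ∈ S := by
      by_contra hnot
      rw [exchangeTarget, if_pos ⟨hlt, hnot⟩] at hstay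
      exact hlt.ne' hstay
    have hsucc : numAbove S q = numAbove S (oddEvenPartner n t q) + 1 :=
      numAbove_eq_succ hmem hlt fun p hp => by rw [Fin.le_def]; rw [Fin.lt_def] at hp; omega
    -- the one at `q + 1` is out of phase, hence already final
    have := (hS _ hmem).1 (by omega)
    omega
  · have : numAbove S q = 0 := numAbove_of_isMax fun p _ => by rw [Fin.le_def]; omega
    omega

lemma OddEvenInvariant.succ {S : Finset (Fin n)} (hS : OddEvenInvariant t S) :
    OddEvenInvariant (t + 1) (S.image (exchangeTarget (oddEvenPartner n t) S)) := by
  rintro _ hq'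
  obtain ⟨q, hq, rfl⟩ := mem_image.1 hq'
  rw [numAbove_image (exchangeTarget_oddEvenPartner_strictMonoOn S) hq]
  obtain ⟨hphase, hbound⟩ := hS q hq
  by_cases hmove : q < oddEvenPartner n t q ∧ oddEvenPartner n t q ∉ S
  · rw [exchangeTarget, if_pos hmove, val_oddEvenPartner_of_lt hmove.1]
    have := (lt_oddEvenPartner_iff.1 hmove.1).1
    constructor
    · intro; left; omega
    · omega
  · have hstay : exchangeTarget (oddEvenPartner n t) S q = q := if_neg hmove
    have stuck := hS.val_add_numAbove_eq_of_stuck (q := q)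
    rw [hstay]
    constructor
    · intro hr
      by_cases hq_phase : q.val % 2 = t % 2
      · exact Or.inr (stuck (by omega) hq_phase hstay)
      · left; omega
    · by_contra hlt
      rcases hphase (by omega) with hq_phase | hn
      · have := stuck (by omega) hq_phase hstay
        omega
      · omega

lemma OddEvenInvariant.upward_closed {S : Finset (Fin n)} (hS : OddEvenInvariant n S) {q p : Fin n}
    (hq : q ∈ S) (hqp : q ≤ p) : p ∈ S := by
  have hfull : {x ∈ S | q < x} = Ioi q := by
    refine eq_of_subset_of_card_le (fun x hx => mem_Ioi.2 (mem_filter.1 hx).2) ?_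
    have := (hS q hq).2
    rw [min_self] at this
    rw [Fin.card_Ioi]
    change n - 1 - q ≤ numAbove S q
    omega
  rcases hqp.eq_or_lt with rfl | hlt
  · exact hq
  · have : p ∈ {x ∈ S | q < x} := hfull ▸ mem_Ioi.2 hlt
    exact (mem_filter.1 this).1

theorem monotone_oddEvenSort_bool (b : Fin n → Bool) : Monotone (oddEvenSort n b n) := by
  have hinv : ∀ t, OddEvenInvariant t ({q | oddEvenSort n b t q} : Finset (Fin n)) := by
    intro t
    induction t with
    | zero => exact oddEvenInvariant_zero _
    | succ t ih =>
      rw [oddEvenSort, filter_compareExchange oddEvenPartner_involutive]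
      exact ih.succ
  intro q p hqp
  cases hbq : oddEvenSort n b n q
  · exact Bool.false_le _
  · have := (hinv n).upward_closed (by simpa using hbq) hqp
    simp only [mem_filter, mem_univ, true_and] at this
    rw [this]

theorem monotone_oddEvenSort {β : Type*} [LinearOrder β] (f : Fin n → β) :
    Monotone (oddEvenSort n f n) := by
  intro q p hqp
  by_contra hlt
  set θ := oddEvenSort n f n q
  have hθ : Monotone fun x => decide (θ ≤ x) := fun a b hab =>
    Bool.le_iff_imp.2 fun h => decide_eq_true ((of_decide_eq_true h).trans hab)
  have := monotone_oddEvenSort_bool ((fun x => decide (θ ≤ x)) ∘ f) hqp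
  rw [← hθ.comp_oddEvenSort] at this
  exact hlt (of_decide_eq_true (Bool.le_iff_imp.1 this (decide_eq_true le_rfl)))

end OddEvenTranspositionSort

section PathRouting

variable {n : ℕ}

def oddEvenSwap (n t : ℕ) (d : Perm (Fin n)) : Perm (Fin n) :=
  exchangeSwap (oddEvenPartner_involutive (t := t)) d

def oddEvenSortPerm (n : ℕ) (d : Perm (Fin n)) : ℕ → Perm (Fin n)
  | 0 => d
  | t + 1 => oddEvenSortPerm n d t * oddEvenSwap n t (oddEvenSortPerm n d t)

lemma coe_oddEvenSortPerm (d : Perm (Fin n)) (t : ℕ) :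
    ⇑(oddEvenSortPerm n d t) = oddEvenSort n d t := by
  induction t with
  | zero => rfl
  | succ t ih => rw [oddEvenSortPerm, oddEvenSwap, coe_mul_exchangeSwap, ih, oddEvenSort]

lemma oddEvenSortPerm_eq_mul_prod (d : Perm (Fin n)) (t : ℕ) :
    oddEvenSortPerm n d t =
      d * (List.ofFn fun i : Fin t => oddEvenSwap n i (oddEvenSortPerm n d i)).prod := by
  induction t with
  | zero => simp [oddEvenSortPerm]
  | succ t ih =>
    rw [oddEvenSortPerm, List.ofFn_succ', List.prod_concat, ← mul_assoc]
    simp only [Fin.val_castSucc, Fin.val_last, ← ih]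

lemma oddEvenSortPerm_self_eq_one (d : Perm (Fin n)) : oddEvenSortPerm n d n = 1 := by
  have hmono : Monotone (oddEvenSortPerm n d n) := by
    rw [coe_oddEvenSortPerm]
    exact monotone_oddEvenSort _
  ext q
  simp [(hmono.strictMono_of_injective (Equiv.injective _)).apply_eq]

theorem routes_pathGraph (σ : Perm (Fin n)) : Routes (SimpleGraph.pathGraph n).Adj n σ :=
  ⟨fun i => oddEvenSwap n i (oddEvenSortPerm n σ⁻¹ i),
    fun _ => isRoutingStep_exchangeSwap _ oddEvenPartner_eq_or_adj _,
    (inv_mul_eq_one.1 (by rw [← oddEvenSortPerm_eq_mul_prod, oddEvenSortPerm_self_eq_one])).symm⟩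

end PathRouting

section ProductRouting

variable {G H : Type*}

def prodCongrLeftHom : (H → Perm G) →* Perm (G × H) where
  toFun ρ := prodCongrLeft ρ
  map_one' := Equiv.ext fun _ => rfl
  map_mul' _ _ := Equiv.ext fun _ => rfl

def prodCongrRightHom : (G → Perm H) →* Perm (G × H) where
  toFun ρ := prodCongrRight ρ
  map_one' := Equiv.ext fun _ => rfl
  map_mul' _ _ := Equiv.ext fun _ => rfl

variable {r : G → G → Prop} {s : H → H → Prop} {m n : ℕ}

lemma isRoutingStep_prodCongrLeft {ρ : H → Perm G} (h : ∀ y, IsRoutingStep r (ρ y)) :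
    IsRoutingStep (fun a b => r a.1 b.1 ∧ a.2 = b.2) (prodCongrLeft ρ) :=
  ⟨fun ⟨x, y⟩ => by simp [(h y).1 x],
    fun ⟨x, y⟩ => ((h y).2 x).imp (fun hfix => by simp [hfix]) fun hr => ⟨hr, rfl⟩⟩

lemma isRoutingStep_prodCongrRight {ρ : G → Perm H} (h : ∀ x, IsRoutingStep s (ρ x)) :
    IsRoutingStep (fun a b => s a.2 b.2 ∧ a.1 = b.1) (prodCongrRight ρ) :=
  ⟨fun ⟨x, y⟩ => by simp [(h x).1 y],
    fun ⟨x, y⟩ => ((h x).2 y).imp (fun hfix => by simp [hfix]) fun hs => ⟨hs, rfl⟩⟩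

lemma routes_prodCongrLeft {ρ : H → Perm G} (h : ∀ y, Routes r m (ρ y)) :
    Routes (fun a b => r a.1 b.1 ∧ a.2 = b.2) m (prodCongrLeft ρ) :=
  Routes.of_monoidHom prodCongrLeftHom (fun _ => isRoutingStep_prodCongrLeft) h

lemma routes_prodCongrRight {ρ : G → Perm H} (h : ∀ x, Routes s n (ρ x)) :
    Routes (fun a b => s a.2 b.2 ∧ a.1 = b.1) n (prodCongrRight ρ) :=
  Routes.of_monoidHom prodCongrRightHom (fun _ => isRoutingStep_prodCongrRight) h

lemma exists_prodCongrLeft_eq (f : Perm (G × H)) (hf : ∀ a, (f a).2 = a.2) :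
    ∃ ρ : H → Perm G, prodCongrLeft ρ = f := by
  have hf' : ∀ a, (f.symm a).2 = a.2 := fun a => by simpa using (hf (f.symm a)).symm
  refine ⟨fun y => ⟨fun x => (f (x, y)).1, fun x => (f.symm (x, y)).1, fun x => ?_, fun x => ?_⟩,
    Equiv.ext fun a => Prod.ext rfl (hf a).symm⟩
  · change (f.symm ((f (x, y)).1, y)).1 = x
    rw [show ((f (x, y)).1, y) = f (x, y) from Prod.ext rfl (hf (x, y)).symm, symm_apply_apply]
  · change (f ((f.symm (x, y)).1, y)).1 = x
    rw [show ((f.symm (x, y)).1, y) = f.symm (x, y) from Prod.ext rfl (hf' (x, y)).symm,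
      apply_symm_apply]

lemma exists_prodCongrRight_eq (f : Perm (G × H)) (hf : ∀ a, (f a).1 = a.1) :
    ∃ ρ : G → Perm H, prodCongrRight ρ = f := by
  have hf' : ∀ a, (f.symm a).1 = a.1 := fun a => by simpa using (hf (f.symm a)).symm
  refine ⟨fun x => ⟨fun y => (f (x, y)).2, fun y => (f.symm (x, y)).2, fun y => ?_, fun y => ?_⟩,
    Equiv.ext fun a => Prod.ext (hf a).symm rfl⟩
  · change (f.symm (x, (f (x, y)).2)).2 = y
    rw [show (x, (f (x, y)).2) = f (x, y) from Prod.ext (hf (x, y)).symm rfl, symm_apply_apply]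
  · change (f (x, (f.symm (x, y)).2)).2 = y
    rw [show (x, (f.symm (x, y)).2) = f.symm (x, y) from Prod.ext (hf' (x, y)).symm rfl,
      apply_symm_apply]

end ProductRouting

section Konig

variable {V W : Type*} [DecidableEq V] [DecidableEq W]

lemma exists_perfectMatching [Fintype W] {s : Finset V} {F₁ F₂ : V → W} {k : ℕ} (hk : 0 < k)
    (h₁ : ∀ w, #{v ∈ s | F₁ v = w} = k) (h₂ : ∀ w, #{v ∈ s | F₂ v = w} = k) :
    ∃ M ⊆ s, (∀ w, #{v ∈ M | F₁ v = w} = 1) ∧ (∀ w, #{v ∈ M | F₂ v = w} = 1) := by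
  classical
  have hall : ∀ A : Finset W, #A ≤ #{w' | ∃ w ∈ A, ∃ v ∈ s, F₁ v = w ∧ F₂ v = w'} := by
    intro A
    set N : Finset W := {w' | ∃ w ∈ A, ∃ v ∈ s, F₁ v = w ∧ F₂ v = w'}
    have hsub : {v ∈ s | F₁ v ∈ A} ⊆ {v ∈ s | F₂ v ∈ N} := by
      intro v hv
      simp only [N, mem_filter, mem_univ, true_and] at hv ⊢
      exact ⟨hv.1, F₁ v, hv.2, v, hv.1, rfl, rfl⟩
    have := card_le_card hsub
    rw [← sum_card_fiberwise_eq_card_filter, ← sum_card_fiberwise_eq_card_filter,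
      sum_congr rfl fun w _ => h₁ w, sum_congr rfl fun w _ => h₂ w, sum_const, sum_const,
      smul_eq_mul, smul_eq_mul] at this
    exact Nat.le_of_mul_le_mul_right this hk
  obtain ⟨f, hf, hfm⟩ := (Fintype.all_card_le_filter_rel_iff_exists_injective _).1 hall
  choose m hms hm₁ hm₂ using hfm
  refine ⟨univ.image m, fun v hv => ?_, fun w => ?_, fun w => ?_⟩
  · obtain ⟨w, -, rfl⟩ := mem_image.1 hv
    exact hms w
  · rw [card_eq_one]
    refine ⟨m w, ?_⟩
    ext v
    simp only [mem_filter, mem_image, mem_univ, true_and, mem_singleton]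
    constructor
    · rintro ⟨⟨u, rfl⟩, rfl⟩
      rw [hm₁ u]
    · rintro rfl
      exact ⟨⟨w, rfl⟩, hm₁ w⟩
  · obtain ⟨u, rfl⟩ := (Finite.injective_iff_surjective.1 hf) w
    rw [card_eq_one]
    refine ⟨m u, ?_⟩
    ext v
    simp only [mem_filter, mem_image, mem_univ, true_and, mem_singleton]
    constructor
    · rintro ⟨⟨u', rfl⟩, h⟩
      rw [hf ((hm₂ u').symm.trans h)]
    · rintro rfl
      exact ⟨⟨u, rfl⟩, hm₂ u⟩

lemma injOn_ite_mem {s M : Finset V} {F : V → W} {c : V → ℕ} {k : ℕ}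
    (hc : ∀ v ∈ s \ M, c v < k) (hinj : Set.InjOn (fun v => (c v, F v)) ↑(s \ M))
    (hM : ∀ w, #{v ∈ M | F v = w} = 1) :
    Set.InjOn (fun v => (if v ∈ M then k else c v, F v)) s := by
  intro v hv w hw hvw
  simp only [Prod.mk.injEq] at hvw
  obtain ⟨hcvw, hF⟩ := hvw
  by_cases hvM : v ∈ M <;> by_cases hwM : w ∈ M <;> simp only [hvM, hwM, if_true, if_false] at hcvw
  · exact card_le_one.1 (hM (F v)).le v (by simp [hvM]) w (by simp [hwM, hF])
  · exact absurd (hc w (mem_sdiff.2 ⟨hw, hwM⟩)) (by omega)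
  · exact absurd (hc v (mem_sdiff.2 ⟨hv, hvM⟩)) (by omega)
  · exact hinj (by simpa using ⟨hv, hvM⟩) (by simpa using ⟨hw, hwM⟩) (by simp [hcvw, hF])

lemma card_filter_sdiff_of_subset {s M : Finset V} (hM : M ⊆ s) (P : V → Prop) [DecidablePred P] :
    #{v ∈ s \ M | P v} = #{v ∈ s | P v} - #{v ∈ M | P v} := by
  rw [← card_sdiff_of_subset (filter_subset_filter P hM)]
  congr 1
  ext v
  simp only [mem_filter, mem_sdiff]
  tauto

/-- König's edge-colouring theorem for the `k`-regular bipartite multigraph with edge set `s`,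
edge `v` joining `F₁ v` on the left to `F₂ v` on the right. -/
theorem exists_edgeColoring [Fintype W] (k : ℕ) (s : Finset V) (F₁ F₂ : V → W)
    (h₁ : ∀ w, #{v ∈ s | F₁ v = w} = k) (h₂ : ∀ w, #{v ∈ s | F₂ v = w} = k) :
    ∃ c : V → ℕ, (∀ v ∈ s, c v < k) ∧ Set.InjOn (fun v => (c v, F₁ v)) s ∧
      Set.InjOn (fun v => (c v, F₂ v)) s := by
  induction k generalizing s with
  | zero =>
    have hs : s = ∅ := eq_empty_of_forall_notMem fun v hv => by
      have hfib : v ∈ {x ∈ s | F₁ x = F₁ v} := mem_filter.2 ⟨hv, rfl⟩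
      rw [card_eq_zero.1 (h₁ _)] at hfib
      exact notMem_empty v hfib
    subst hs
    exact ⟨fun _ => 0, by simp, by simp, by simp⟩
  | succ k ih =>
    obtain ⟨M, hMs, hM₁, hM₂⟩ := exists_perfectMatching k.succ_pos h₁ h₂
    obtain ⟨c, hc, hinj₁, hinj₂⟩ := ih (s \ M)
      (fun w => by rw [card_filter_sdiff_of_subset hMs, h₁, hM₁]; rfl)
      (fun w => by rw [card_filter_sdiff_of_subset hMs, h₂, hM₂]; rfl)
    refine ⟨fun v => if v ∈ M then k else c v, fun v hv => ?_,
      injOn_ite_mem hc hinj₁ hM₁, injOn_ite_mem hc hinj₂ hM₂⟩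
    by_cases hvM : v ∈ M
    · simp [hvM]
    · simpa [hvM] using (hc v (mem_sdiff.2 ⟨hv, hvM⟩)).trans (Nat.lt_succ_self k)

end Konig

section ProductFactorization

variable {G H : Type*} [Fintype G] [Fintype H]

lemma exists_prodColoring (π : Perm (G × H)) :
    ∃ c : G × H → G, Injective (fun a => (c a, a.2)) ∧ Injective (fun a => (c a, (π a).2)) := by
  classical
  have hfib : ∀ y : H, #{a : G × H | a.2 = y} = Fintype.card G := fun y => by
    rw [show ({a : G × H | a.2 = y} : Finset _) = univ ×ˢ {y} by
      ext; simp only [mem_filter, mem_univ, true_and, mem_product, mem_singleton], card_product,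
      card_singleton, mul_one, card_univ]
  have hfib' : ∀ y : H, #{a : G × H | (π a).2 = y} = Fintype.card G := fun y => by
    rw [← hfib y]
    exact card_equiv π (by simp)
  obtain ⟨c, hc, hinj₁, hinj₂⟩ := exists_edgeColoring _ univ Prod.snd _ hfib hfib'
  let e := Fintype.equivFin G
  refine ⟨fun a => e.symm ⟨c a, hc a (mem_univ a)⟩, fun a b hab => ?_, fun a b hab => ?_⟩
  · exact hinj₁ (mem_univ a) (mem_univ b) (by simpa [e, Fin.ext_iff] using hab)
  · exact hinj₂ (mem_univ a) (mem_univ b) (by simpa [e, Fin.ext_iff] using hab)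

lemma exists_eq_prodCongrLeft_mul_prodCongrRight_mul_prodCongrLeft (π : Perm (G × H)) :
    ∃ (ρ₁ ρ₃ : H → Perm G) (ρ₂ : G → Perm H),
      π = prodCongrLeft ρ₃ * prodCongrRight ρ₂ * prodCongrLeft ρ₁ := by
  obtain ⟨c, hc₁, hc₂⟩ := exists_prodColoring π
  -- `φ` moves each point within its row to column `c a`, then `ψ * φ⁻¹` moves it within that
  -- column to its target row.
  let φ := Equiv.ofBijective _ hc₁.bijective_of_finite
  let ψ := Equiv.ofBijective _ hc₂.bijective_of_finite
  obtain ⟨ρ₁, h₁⟩ := exists_prodCongrLeft_eq φ fun _ => rfl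
  obtain ⟨ρ₂, h₂⟩ := exists_prodCongrRight_eq (ψ * φ⁻¹) fun a => by
    change (φ (φ.symm a)).1 = a.1
    rw [apply_symm_apply]
  obtain ⟨ρ₃, h₃⟩ := exists_prodCongrLeft_eq (π * ψ⁻¹) fun a => by
    change (ψ (ψ.symm a)).2 = a.2
    rw [apply_symm_apply]
  exact ⟨ρ₁, ρ₃, ρ₂, by rw [h₁, h₂, h₃]; group⟩

theorem routes_prod {r : G → G → Prop} {s : H → H → Prop} {m n : ℕ}
    (hG : ∀ ρ : Perm G, Routes r m ρ) (hH : ∀ ρ : Perm H, Routes s n ρ) (π : Perm (G × H)) :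
    Routes (fun a b => r a.1 b.1 ∧ a.2 = b.2 ∨ s a.2 b.2 ∧ a.1 = b.1) (m + n + m) π := by
  obtain ⟨ρ₁, ρ₃, ρ₂, rfl⟩ := exists_eq_prodCongrLeft_mul_prodCongrRight_mul_prodCongrLeft π
  exact (((routes_prodCongrLeft fun y => hG (ρ₃ y)).mono fun _ _ => Or.inl).mul
    ((routes_prodCongrRight fun x => hH (ρ₂ x)).mono fun _ _ => Or.inr)).mul
    ((routes_prodCongrLeft fun y => hG (ρ₁ y)).mono fun _ _ => Or.inl)

end ProductFactorization

section Grid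

def gridSqDist {l S : ℕ} (x y : Fin l → Fin S) : ℝ :=
  ∑ j, (((x j : ℕ) : ℝ) - ((y j : ℕ) : ℝ)) ^ 2

lemma sq_sub_eq_one_of_pathGraph_adj {S : ℕ} {a b : Fin S} (h : (SimpleGraph.pathGraph S).Adj a b) :
    (((a : ℕ) : ℝ) - ((b : ℕ) : ℝ)) ^ 2 = 1 := by
  rcases SimpleGraph.pathGraph_adj.1 h with h | h <;> rw [← h] <;> push_cast <;> ring

theorem routes_grid {l S : ℕ} (hl : 1 ≤ l) (σ : Perm (Fin l → Fin S)) :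
    Routes (fun x y => gridSqDist x y ≤ 1) ((2 * l - 1) * S) σ := by
  induction l, hl using Nat.le_induction with
  | base =>
    let e : Fin S ≃ (Fin 1 → Fin S) := (Equiv.funUnique (Fin 1) (Fin S)).symm
    have h := (routes_pathGraph (e.permCongr.symm σ)).permCongr e
      (r' := fun x y => gridSqDist x y ≤ 1) fun a b hab => by
      simp [gridSqDist, e, sq_sub_eq_one_of_pathGraph_adj hab]
    rw [apply_symm_apply] at h
    simpa using h
  | succ l hl ih =>
    let e := Fin.consEquiv fun _ : Fin (l + 1) => Fin S
    have h := (routes_prod routes_pathGraph ih (e.permCongr.symm σ)).permCongr e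
      (r' := fun x y => gridSqDist x y ≤ 1) fun a b hab => by
      rcases hab with ⟨hadj, hsnd⟩ | ⟨hnear, hfst⟩
      · simp [gridSqDist, e, Fin.sum_univ_succ, sq_sub_eq_one_of_pathGraph_adj hadj, hsnd]
      · simpa [gridSqDist, e, Fin.sum_univ_succ, hfst] using hnear
    rw [apply_symm_apply] at h
    convert h using 1
    rw [show 2 * (l + 1) - 1 = 1 + (2 * l - 1) + 1 by omega]
    ring

end Grid

lemma foldl_comp_ofFn_rev {α : Type*} {n : ℕ} (τ : Fin n → Perm α) :
    (List.ofFn fun i => ⇑(τ i.rev)).foldl (fun g h => h ∘ g) id = ⇑(List.ofFn τ).prod := by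
  have : (List.ofFn fun i => ⇑(τ i.rev)) = ((List.ofFn τ).map (⇑)).reverse :=
    List.ext_getElem (by simp) fun i _ _ => by simp [Fin.rev, Nat.sub_sub, Nat.add_comm]
  rw [this, List.foldl_reverse]
  induction List.ofFn τ with
  | nil => rfl
  | cons a L ih => simp [ih]

theorem stmt_11_general (l S : ℕ) (hl : 1 ≤ l)
    (σ : Equiv.Perm (Fin l → Fin S)) :
    ∃ σs : Fin ((2 * l - 1) * S) → Equiv.Perm (Fin l → Fin S),
      (∀ i x, σs i (σs i x) = x) ∧
      (∀ i x, Real.sqrt (∑ j, (((x j : ℕ) : ℝ) - ((σs i x j : ℕ) : ℝ)) ^ 2) ≤ 1) ∧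
      (∀ x, σ x =
        (List.ofFn fun i => ⇑(σs i)).foldl (fun g h => h ∘ g) id x) := by
  obtain ⟨τ, hτ, hprod⟩ := routes_grid hl σ
  refine ⟨fun i => τ i.rev, fun i => (hτ _).1, fun i x => ?_, fun x => ?_⟩
  · rcases (hτ i.rev).2 x with hfix | hnear
    · simp [hfix]
    · exact Real.sqrt_le_one.2 hnear
  · rw [foldl_comp_ofFn_rev, hprod]

theorem stmt_11 (l S : ℕ) (hl : 1 ≤ l) (hS : 1 ≤ S)
    (σ : Equiv.Perm (Fin l → Fin S)) :
    ∃ σs : Fin ((2 * l - 1) * S) → Equiv.Perm (Fin l → Fin S),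
      (∀ i x, σs i (σs i x) = x) ∧
      (∀ i x, Real.sqrt (∑ j, (((x j : ℕ) : ℝ) - ((σs i x j : ℕ) : ℝ)) ^ 2) ≤ 1) ∧
      (∀ x, σ x =
        (List.ofFn fun i => ⇑(σs i)).foldl (fun g h => h ∘ g) id x) :=
  stmt_11_general l S hl σ
end
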